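/- arXiv:2005.14674 — 11 statements merged into one kernel-verified Lean document; each statement's English description precedes it below -/
import Mathlib

section
/- Let $0<t<p\le 2$ and $x\in\mathbb{R}^\Lambda$ with $\|x\|_{k_t}<\infty$. Then for all $\alpha>0$, $\|x-T_\alpha(x)\|_{\omega_p,p} \le 2(2^{p-t}-1)^{-1/p}\,\|x\|_{k_t}^{t/p}\,\alpha^{(p-t)/p}$. -/
open scoped ENNReal
noncomputable section

variable {Λ : Type*}

/-- Weighted `ℓ^p` quasi-norm (value in `ℝ≥0∞`). -/
def wnorm (ω : Λ → ℝ) (p : ℝ) (x : Λ → ℝ) : ℝ≥0∞ :=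
  (∑' j, ENNReal.ofReal (ω j ^ p * |x j| ^ p)) ^ (1 / p)

/-- The interpolating weights `(ω_t)_j = (a_j^{2t-2} r_j^{2-t})^{1/t}`. -/
def omegaWeight (a r : Λ → ℝ) (t : ℝ) : Λ → ℝ :=
  fun j => (a j ^ (2 * t - 2) * r j ^ (2 - t)) ^ (1 / t)

/-- Weighted `ℓ¹` norm `‖x‖_{r,1} = ∑ r_j |x_j|`. -/
def rnorm1 (r : Λ → ℝ) (x : Λ → ℝ) : ℝ≥0∞ := ∑' j, ENNReal.ofReal (r j * |x j|)

/-- Weighted `ℓ²` norm `‖x‖_{a,2} = (∑ a_j² x_j²)^{1/2}`. -/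
def anorm2 (a : Λ → ℝ) (x : Λ → ℝ) : ℝ≥0∞ :=
  (∑' j, ENNReal.ofReal (a j ^ 2 * x j ^ 2)) ^ ((1 : ℝ) / 2)

/-- The sum `∑_j a_j⁻² r_j² 𝟙_{a_j⁻² r_j α < |x_j|}`. -/
def kSum (a r : Λ → ℝ) (α : ℝ) (x : Λ → ℝ) : ℝ≥0∞ :=
  ∑' j, ENNReal.ofReal (if r j * α / a j ^ 2 < |x j| then r j ^ 2 / a j ^ 2 else 0)

/-- The weak quasi-norm `‖x‖_{k_t} = sup_{α>0} α (kSum α x)^{1/t}`. -/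
def knorm (a r : Λ → ℝ) (t : ℝ) (x : Λ → ℝ) : ℝ≥0∞ :=
  ⨆ α ∈ Set.Ioi (0 : ℝ), ENNReal.ofReal α * (kSum a r α x) ^ (1 / t)

/-- Hard thresholding operator. -/
def Tthresh (a r : Λ → ℝ) (α : ℝ) (x : Λ → ℝ) : Λ → ℝ :=
  fun j => if r j * α / a j ^ 2 < |x j| then x j else 0

/-!
Put `u_j = a_j² |x_j| / r_j` and `w_j = r_j² / a_j²`. The thresholding condition reads `α < u_j`,
the `j`-th summand of `‖x - T_α x‖^p` is `w_j u_j^p` on `{u ≤ α}`, and `kSum β x` is the `w`-mass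
of `{u > β}`, which the weak norm bounds by `‖x‖_{k_t}^t β^{-t}`. Cutting `{0 < u ≤ α}` into the
dyadic shells `α 2^{-k-1} < u ≤ α 2^{-k}` bounds the sum by
`‖x‖_{k_t}^t ∑_k (α 2^{-k})^p (α 2^{-k-1})^{-t}`, a geometric series of ratio `2^{-(p-t)}` with sum
`2^p α^{p-t} / (2^{p-t} - 1)`.
-/

lemma exists_half_pow_lt_le {u α : ℝ} (hu : 0 < u) (huα : u ≤ α) :
    ∃ k : ℕ, α / 2 ^ (k + 1) < u ∧ u ≤ α / 2 ^ k := by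
  obtain ⟨k, hk, hk'⟩ := exists_nat_pow_near ((one_le_div hu).2 huα) one_lt_two
  refine ⟨k, (div_lt_iff₀ (by positivity)).2 ?_, (le_div_iff₀ (by positivity)).2 ?_⟩
  · rw [mul_comm]; exact (div_lt_iff₀ hu).1 hk'
  · rw [mul_comm]; exact (le_div_iff₀ hu).1 hk

lemma dyadic_rpow_mul_rpow_neg {α : ℝ} (hα : 0 < α) (p t : ℝ) (k : ℕ) :
    (α / 2 ^ k) ^ p * (α / 2 ^ (k + 1)) ^ (-t) =
      2 ^ t * α ^ (p - t) * (((2 : ℝ) ^ (p - t))⁻¹) ^ k := by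
  have h2 : (0:ℝ) < 2 := two_pos
  have e : (2:ℝ) ^ (-(k * p)) * 2 ^ (-((k + 1 : ℕ) * -t)) = 2 ^ t * 2 ^ ((p - t) * -k) := by
    rw [← Real.rpow_add h2, ← Real.rpow_add h2]; push_cast; ring_nf
  simp only [← Real.rpow_natCast]
  rw [Real.div_rpow hα.le (by positivity), Real.div_rpow hα.le (by positivity),
    ← Real.rpow_mul h2.le, ← Real.rpow_mul h2.le, ← Real.rpow_neg_eq_inv_rpow,
    ← Real.rpow_mul h2.le, Real.rpow_sub hα, Real.rpow_neg hα.le, div_eq_mul_inv, div_eq_mul_inv,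
    div_eq_mul_inv, ← Real.rpow_neg h2.le, ← Real.rpow_neg h2.le]
  linear_combination (α ^ p * (α ^ t)⁻¹) * e

lemma one_sub_inv_rpow_two {p t : ℝ} (htp : t < p) :
    2 ^ t * (1 - ((2 : ℝ) ^ (p - t))⁻¹)⁻¹ = 2 ^ p / (2 ^ (p - t) - 1) := by
  have hA : (1:ℝ) < 2 ^ (p - t) := Real.one_lt_rpow one_lt_two (sub_pos.2 htp)
  have h2p : (2:ℝ) ^ p = 2 ^ t * 2 ^ (p - t) := by
    rw [← Real.rpow_add two_pos, add_sub_cancel]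
  have : (2 : ℝ) ^ (p - t) - 1 ≠ 0 := by linarith
  rw [h2p]
  field_simp

lemma two_rpow_div_mul_rpow_one_div {p t α : ℝ} (hp : 0 < p) (htp : t < p) (hα : 0 < α) :
    ((2 : ℝ) ^ p / (2 ^ (p - t) - 1) * α ^ (p - t)) ^ (1 / p) =
      2 * (2 ^ (p - t) - 1) ^ (-(1 / p)) * α ^ ((p - t) / p) := by
  have hA : (0:ℝ) < 2 ^ (p - t) - 1 := by
    have := Real.one_lt_rpow one_lt_two (sub_pos.2 htp); linarith
  rw [Real.mul_rpow (by positivity) (by positivity), Real.div_rpow (by positivity) hA.le,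
    ← Real.rpow_mul two_pos.le, mul_one_div_cancel hp.ne', Real.rpow_one, Real.rpow_neg hA.le,
    ← Real.rpow_mul hα.le, mul_one_div, div_eq_mul_inv]

lemma tsum_ofReal_geometric {c q : ℝ} (hc : 0 ≤ c) (hq : 0 ≤ q) (hq1 : q < 1) :
    ∑' k : ℕ, ENNReal.ofReal (c * q ^ k) = ENNReal.ofReal (c * (1 - q)⁻¹) := by
  rw [← ENNReal.ofReal_tsum_of_nonneg (fun k => by positivity)
    ((summable_geometric_of_lt_one hq hq1).mul_left c), tsum_mul_left,
    tsum_geometric_of_lt_one hq hq1]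

lemma ofReal_ite_le_tsum_dyadic {p α u w : ℝ} (hp : 0 < p) (hα : 0 < α) (hu : 0 ≤ u)
    (hw : 0 ≤ w) :
    ENNReal.ofReal (if u ≤ α then w * u ^ p else 0) ≤
      ∑' k : ℕ, ENNReal.ofReal ((α / 2 ^ k) ^ p) *
        ENNReal.ofReal (if α / 2 ^ (k + 1) < u then w else 0) := by
  split_ifs with huα
  · rcases hu.eq_or_lt with rfl | hu
    · simp [Real.zero_rpow hp.ne']
    obtain ⟨k, hk, hk'⟩ := exists_half_pow_lt_le hu huα
    calc ENNReal.ofReal (w * u ^ p) ≤ ENNReal.ofReal ((α / 2 ^ k) ^ p) * ENNReal.ofReal w := by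
          rw [← ENNReal.ofReal_mul (by positivity), mul_comm]
          gcongr
      _ ≤ _ := by
          refine le_of_eq_of_le ?_ (ENNReal.le_tsum k)
          rw [if_pos hk]
  · simp

theorem tsum_ite_le_of_weak_tail {ι : Type*} (w u : ι → ℝ) (hw : ∀ j, 0 ≤ w j)
    (hu : ∀ j, 0 ≤ u j) {t p α : ℝ} (hp : 0 < p) (htp : t < p) (hα : 0 < α) (C : ℝ≥0∞)
    (hC : ∀ β, 0 < β → ∑' j, ENNReal.ofReal (if β < u j then w j else 0) ≤
      C * ENNReal.ofReal (β ^ (-t))) :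
    ∑' j, ENNReal.ofReal (if u j ≤ α then w j * u j ^ p else 0) ≤
      C * ENNReal.ofReal (2 ^ p / (2 ^ (p - t) - 1) * α ^ (p - t)) := by
  have hq : ((2 : ℝ) ^ (p - t))⁻¹ < 1 :=
    inv_lt_one_of_one_lt₀ (Real.one_lt_rpow one_lt_two (sub_pos.2 htp))
  calc ∑' j, ENNReal.ofReal (if u j ≤ α then w j * u j ^ p else 0)
      ≤ ∑' j, ∑' k : ℕ, ENNReal.ofReal ((α / 2 ^ k) ^ p) *
          ENNReal.ofReal (if α / 2 ^ (k + 1) < u j then w j else 0) :=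
        ENNReal.tsum_le_tsum fun j => ofReal_ite_le_tsum_dyadic hp hα (hu j) (hw j)
    _ = ∑' k : ℕ, ENNReal.ofReal ((α / 2 ^ k) ^ p) *
          ∑' j, ENNReal.ofReal (if α / 2 ^ (k + 1) < u j then w j else 0) := by
        rw [ENNReal.tsum_comm]
        simp only [ENNReal.tsum_mul_left]
    _ ≤ ∑' k : ℕ, ENNReal.ofReal ((α / 2 ^ k) ^ p) *
          (C * ENNReal.ofReal ((α / 2 ^ (k + 1)) ^ (-t))) :=
        ENNReal.tsum_le_tsum fun k => by gcongr; exact hC _ (by positivity)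
    _ = C * ∑' k : ℕ, ENNReal.ofReal (2 ^ t * α ^ (p - t) * (((2 : ℝ) ^ (p - t))⁻¹) ^ k) := by
        rw [← ENNReal.tsum_mul_left]
        congr 1 with k
        rw [mul_left_comm, ← ENNReal.ofReal_mul (by positivity), dyadic_rpow_mul_rpow_neg hα]
    _ = C * ENNReal.ofReal (2 ^ p / (2 ^ (p - t) - 1) * α ^ (p - t)) := by
        rw [tsum_ofReal_geometric (by positivity) (by positivity) hq, ← one_sub_inv_rpow_two htp]
        ring_nf

lemma div_sq_lt_iff_lt_sq_mul_div {a r X β : ℝ} (ha : a ≠ 0) (hr : 0 < r) :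
    r * β / a ^ 2 < X ↔ β < a ^ 2 * X / r := by
  rw [div_lt_iff₀ (by positivity), lt_div_iff₀' hr, mul_comm X]

section Thresholding

variable (a r : Λ → ℝ)

lemma kSum_eq_tsum (ha : ∀ j, a j ≠ 0) (hr : ∀ j, 0 < r j) (β : ℝ) (x : Λ → ℝ) :
    kSum a r β x =
      ∑' j, ENNReal.ofReal (if β < a j ^ 2 * |x j| / r j then r j ^ 2 / a j ^ 2 else 0) := by
  simp only [kSum, div_sq_lt_iff_lt_sq_mul_div (ha _) (hr _)]

lemma kSum_le_knorm_rpow {t β : ℝ} (ht : 0 < t) (hβ : 0 < β) (x : Λ → ℝ) :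
    kSum a r β x ≤ knorm a r t x ^ t * ENNReal.ofReal (β ^ (-t)) := by
  have h : ENNReal.ofReal β * kSum a r β x ^ (1 / t) ≤ knorm a r t x :=
    le_biSup (fun β : ℝ => ENNReal.ofReal β * kSum a r β x ^ (1 / t)) (Set.mem_Ioi.2 hβ)
  calc kSum a r β x
      = (ENNReal.ofReal β * kSum a r β x ^ (1 / t)) ^ t * ENNReal.ofReal (β ^ (-t)) := by
        rw [ENNReal.mul_rpow_of_nonneg _ _ ht.le, ← ENNReal.rpow_mul, one_div_mul_cancel ht.ne',
          ENNReal.rpow_one, ENNReal.ofReal_rpow_of_pos hβ, mul_right_comm,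
          ← ENNReal.ofReal_mul (by positivity), ← Real.rpow_add hβ, add_neg_cancel,
          Real.rpow_zero, ENNReal.ofReal_one, one_mul]
    _ ≤ _ := by gcongr

lemma omegaWeight_rpow_mul_rpow {p X : ℝ} (hp : 0 < p) (hX : 0 ≤ X) {j : Λ} (ha : 0 < a j)
    (hr : 0 < r j) :
    omegaWeight a r p j ^ p * X ^ p = r j ^ 2 / a j ^ 2 * (a j ^ 2 * X / r j) ^ p := by
  rw [omegaWeight, ← Real.rpow_mul (by positivity), one_div_mul_cancel hp.ne', Real.rpow_one,
    Real.div_rpow (by positivity) hr.le, Real.mul_rpow (by positivity) hX,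
    ← Real.rpow_natCast (a j) 2, ← Real.rpow_natCast (r j) 2, ← Real.rpow_mul ha.le,
    Real.rpow_sub ha, Real.rpow_sub hr]
  push_cast
  field_simp

lemma wnorm_sub_Tthresh (ha : ∀ j, 0 < a j) (hr : ∀ j, 0 < r j) {p : ℝ} (hp : 0 < p) (α : ℝ)
    (x : Λ → ℝ) :
    wnorm (omegaWeight a r p) p (x - Tthresh a r α x) =
      (∑' j, ENNReal.ofReal (if a j ^ 2 * |x j| / r j ≤ α
        then r j ^ 2 / a j ^ 2 * (a j ^ 2 * |x j| / r j) ^ p else 0)) ^ (1 / p) := by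
  unfold wnorm
  congr 1
  refine tsum_congr fun j => ?_
  simp only [Pi.sub_apply, Tthresh, div_sq_lt_iff_lt_sq_mul_div (ha j).ne' (hr j)]
  by_cases h : α < a j ^ 2 * |x j| / r j
  · simp [h, not_le.2 h, Real.zero_rpow hp.ne']
  · rw [if_neg h, if_pos (not_lt.1 h), sub_zero,
      omegaWeight_rpow_mul_rpow a r hp (abs_nonneg _) (ha j) (hr j)]

end Thresholding

theorem stmt2_general (a r : Λ → ℝ) (ha : ∀ j, 0 < a j) (hr : ∀ j, 0 < r j)
    (t p : ℝ) (ht : 0 < t) (htp : t < p)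
    (x : Λ → ℝ) (α : ℝ) (hα : 0 < α) :
    wnorm (omegaWeight a r p) p (x - Tthresh a r α x) ≤
      ENNReal.ofReal (2 * (2 ^ (p - t) - 1) ^ (-(1 / p))) *
        knorm a r t x ^ (t / p) * ENNReal.ofReal (α ^ ((p - t) / p)) := by
  have hp : 0 < p := ht.trans htp
  have hA : (0 : ℝ) < 2 ^ (p - t) - 1 := sub_pos.2 (Real.one_lt_rpow one_lt_two (sub_pos.2 htp))
  have hweak (β : ℝ) (hβ : 0 < β) := kSum_eq_tsum a r (fun j => (ha j).ne') hr β x ▸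
    kSum_le_knorm_rpow a r ht hβ x
  calc wnorm (omegaWeight a r p) p (x - Tthresh a r α x)
      = _ := wnorm_sub_Tthresh a r ha hr hp α x
    _ ≤ (knorm a r t x ^ t *
          ENNReal.ofReal (2 ^ p / (2 ^ (p - t) - 1) * α ^ (p - t))) ^ (1 / p) := by
        gcongr
        exact tsum_ite_le_of_weak_tail _ _ (fun j => by positivity)
          (fun j => div_nonneg (by positivity) (hr j).le) hp htp hα _ hweak
    _ = _ := by
        rw [ENNReal.mul_rpow_of_nonneg _ _ (by positivity), ← ENNReal.rpow_mul,
          ENNReal.ofReal_rpow_of_pos (mul_pos (div_pos (by positivity) hA) (by positivity)),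
          two_rpow_div_mul_rpow_one_div hp htp hα,
          ENNReal.ofReal_mul (mul_nonneg zero_le_two (Real.rpow_nonneg hA.le _)), mul_one_div]
        ring

theorem stmt2 (a r : Λ → ℝ) (ha : ∀ j, 0 < a j) (hr : ∀ j, 0 < r j)
    (t p : ℝ) (ht : 0 < t) (htp : t < p) (hp : p ≤ 2)
    (x : Λ → ℝ) (hx : knorm a r t x ≠ ⊤) (α : ℝ) (hα : 0 < α) :
    wnorm (omegaWeight a r p) p (x - Tthresh a r α x) ≤
      ENNReal.ofReal (2 * (2 ^ (p - t) - 1) ^ (-(1 / p))) *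
        knorm a r t x ^ (t / p) * ENNReal.ofReal (α ^ ((p - t) / p)) :=
  stmt2_general a r ha hr t p ht htp x α hα
end
end

section
/- Let $0<t<p\le 2$ and $x\in\mathbb{R}^\Lambda$ with $\gamma(x):=\sup_{\alpha>0}\alpha^{(t-p)/p}\|x-T_\alpha(x)\|_{\omega_p,p}<\infty$. Then $x\in k_t$ with $\|x\|_{k_t}\le 2^{p/t}(2^t-1)^{-1/t}\gamma(x)^{p/t}$. -/
open scoped ENNReal
noncomputable section

variable {Λ : Type*}

/-- Dyadic pieces used in the proof of `stmt3`. -/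
def gaux (a r : Λ → ℝ) (p α : ℝ) (x : Λ → ℝ) (k : ℕ) (j : Λ) : ℝ≥0∞ :=
  ENNReal.ofReal (((2:ℝ)^k * α)^(-p) *
    ((omegaWeight a r p j) ^ p * |(x - Tthresh a r ((2:ℝ)^(k+1) * α) x) j| ^ p))

private lemma key1 (A R β p : ℝ) (hA : 0 < A) (hR : 0 < R) (hβ : 0 < β) :
    β ^ (-p) * (A ^ (2*p-2) * R ^ (2-p)) * (R * β / A ^ 2) ^ p = R ^ 2 / A ^ 2 := by
  have h2 : (A:ℝ)^2 = A ^ ((2:ℝ)) := by rw [← Real.rpow_natCast A 2]; norm_num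
  have hR2 : (R:ℝ)^2 = R ^ ((2:ℝ)) := by rw [← Real.rpow_natCast R 2]; norm_num
  rw [h2, hR2, Real.div_rpow (by positivity) (by positivity), Real.mul_rpow hR.le hβ.le,
    ← Real.rpow_mul hA.le]
  simp only [Real.rpow_def_of_pos hA, Real.rpow_def_of_pos hR, Real.rpow_def_of_pos hβ,
    ← Real.exp_add, ← Real.exp_sub, div_eq_mul_inv, ← Real.exp_neg, ← Real.exp_add]
  congr 1
  ring

private lemma key2 (α t p : ℝ) (hα : 0 < α) (k : ℕ) :
    ((2:ℝ)^k * α)^(-p) * ((2:ℝ)^(k+1) * α)^(p-t) = α^(-t) * 2^(p-t) * ((2:ℝ)^(-t))^k := by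
  have h1 : ((2:ℝ)^k) = (2:ℝ) ^ ((k:ℝ)) := by rw [Real.rpow_natCast]
  have h2 : ((2:ℝ)^(k+1)) = (2:ℝ) ^ (((k:ℕ)+1:ℝ)) := by
    rw [show ((k:ℕ)+1:ℝ) = ((k+1:ℕ):ℝ) by push_cast; ring, Real.rpow_natCast]
  have h3 : ((2:ℝ)^(-t))^k = (2:ℝ) ^ ((-t)*k) := by
    rw [Real.rpow_mul (by norm_num), Real.rpow_natCast]
  rw [h1, h2, h3, Real.mul_rpow (by positivity) hα.le, Real.mul_rpow (by positivity) hα.le,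
    ← Real.rpow_mul (by norm_num : (0:ℝ) ≤ 2), ← Real.rpow_mul (by norm_num : (0:ℝ) ≤ 2)]
  simp only [Real.rpow_def_of_pos hα, Real.rpow_def_of_pos (by norm_num : (0:ℝ) < 2),
    ← Real.exp_add]
  congr 1
  ring

private lemma key3 (α t p γ : ℝ) (hα : 0 < α) (ht : 0 < t) (htp : t < p) (hγ : 0 ≤ γ) :
    α * (γ^p * α^(-t) * 2^(p-t) * (1 - 2^(-t))⁻¹)^(1/t)
      = 2^(p/t) * (2^t-1)^(-(1/t)) * γ^(p/t) := by
  have hu : (1:ℝ) < 2 ^ t :=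
    Real.one_lt_rpow_iff_of_pos (by norm_num) |>.2 (Or.inl ⟨by norm_num, ht⟩)
  have h1 : (0:ℝ) < 2^t - 1 := by linarith
  have hinv : (1 - (2:ℝ)^(-t))⁻¹ = 2^t * (2^t - 1)⁻¹ := by
    rw [Real.rpow_neg (by norm_num)]
    have h0 : (0:ℝ) < 2 ^ t := by positivity
    field_simp
  have hpt : (2:ℝ)^(p-t) * 2^t = 2^p := by
    rw [← Real.rpow_add (by norm_num : (0:ℝ) < 2)]; ring_nf
  rw [hinv, show γ^p * α^(-t) * 2^(p-t) * (2^t * (2^t-1)⁻¹) = γ^p * α^(-t) * 2^p * (2^t-1)⁻¹ by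
      linear_combination (γ^p * α^(-t) * ((2:ℝ)^t-1)⁻¹) * hpt]
  rw [Real.mul_rpow (by positivity) (by positivity),
      Real.mul_rpow (by positivity) (by positivity),
      Real.mul_rpow (by positivity) (by positivity),
      ← Real.rpow_mul hγ, ← Real.rpow_mul hα.le, ← Real.rpow_mul (by norm_num : (0:ℝ) ≤ 2),
      Real.inv_rpow h1.le, Real.rpow_neg h1.le,
      show p * (1/t) = p/t by field_simp, show -t * (1/t) = -1 by field_simp,
      Real.rpow_neg_one]
  field_simp

private lemma step1 (a r : Λ → ℝ) (ha : ∀ j, 0 < a j) (hr : ∀ j, 0 < r j)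
    (p α : ℝ) (hp0 : 0 < p) (hα : 0 < α) (x : Λ → ℝ) (j : Λ) :
    ENNReal.ofReal (if r j * α / a j ^ 2 < |x j| then r j ^ 2 / a j ^ 2 else 0)
      ≤ ∑' k : ℕ, gaux a r p α x k j := by
  have haj := ha j
  have hrj := hr j
  by_cases hcond : r j * α / a j ^ 2 < |x j|
  · have hc0 : 0 < r j * α / a j ^ 2 := by positivity
    have hex : ∃ n : ℕ, |x j| ≤ r j * α / a j ^ 2 * 2 ^ (n+1) := by
      obtain ⟨n, hn⟩ := pow_unbounded_of_one_lt (|x j| / (r j * α / a j ^ 2))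
        (by norm_num : (1:ℝ) < 2)
      refine ⟨n, ?_⟩
      rw [div_lt_iff₀ hc0] at hn
      have h2n : (0:ℝ) < 2 ^ n := by positivity
      have : r j * α / a j ^ 2 * 2 ^ (n+1) = 2 * (2 ^ n * (r j * α / a j ^ 2)) := by ring
      nlinarith
    classical
    set K := Nat.find hex with hKdef
    have hK1 : |x j| ≤ r j * α / a j ^ 2 * 2 ^ (K+1) := Nat.find_spec hex
    have hK0 : r j * α / a j ^ 2 * 2 ^ K < |x j| := by
      rcases Nat.eq_zero_or_pos K with h0 | hpos
      · rw [h0, pow_zero, mul_one]; exact hcond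
      · obtain ⟨m, hm⟩ := Nat.exists_eq_succ_of_ne_zero hpos.ne'
        have := Nat.find_min hex (by omega : m < K)
        push_neg at this
        rw [hm]
        exact this
    refine le_trans ?_ (ENNReal.le_tsum K)
    rw [if_pos hcond, gaux]
    apply ENNReal.ofReal_le_ofReal
    have hy : (x - Tthresh a r ((2:ℝ)^(K+1) * α) x) j = x j := by
      have hne : ¬ (r j * ((2:ℝ)^(K+1) * α) / a j ^ 2 < |x j|) := by
        rw [show r j * ((2:ℝ)^(K+1) * α) / a j ^ 2 = r j * α / a j ^ 2 * 2 ^ (K+1) by ring]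
        exact not_lt.2 hK1
      simp [Tthresh, hne]
    rw [hy]
    have homega : (omegaWeight a r p j) ^ p = a j ^ (2*p-2) * r j ^ (2-p) := by
      rw [omegaWeight, ← Real.rpow_mul (by positivity), one_div_mul_cancel hp0.ne',
        Real.rpow_one]
    rw [homega]
    set β := (2:ℝ)^K * α with hβdef
    have hβ : 0 < β := by positivity
    have hxb : (r j * β / a j ^ 2) ^ p ≤ |x j| ^ p := by
      apply Real.rpow_le_rpow (by positivity) _ hp0.le
      rw [show r j * β / a j ^ 2 = r j * α / a j ^ 2 * 2 ^ K by rw [hβdef]; ring]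
      exact hK0.le
    calc r j ^ 2 / a j ^ 2
        = β ^ (-p) * (a j ^ (2*p-2) * r j ^ (2-p) * (r j * β / a j ^ 2) ^ p) := by
          rw [← mul_assoc, key1 (a j) (r j) β p haj hrj hβ]
      _ ≤ β ^ (-p) * (a j ^ (2*p-2) * r j ^ (2-p) * |x j| ^ p) := by
          apply mul_le_mul_of_nonneg_left _ (by positivity)
          exact mul_le_mul_of_nonneg_left hxb (by positivity)
  · rw [if_neg hcond]
    simp

private lemma step2 (a r : Λ → ℝ) (t p : ℝ) (ht : 0 < t) (htp : t < p)
    (x : Λ → ℝ) (γ : ℝ) (hγ : 0 ≤ γ) (α : ℝ) (hα : 0 < α)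
    (hbound : ∀ α > (0:ℝ), wnorm (omegaWeight a r p) p (x - Tthresh a r α x) ≤
        ENNReal.ofReal (γ * α ^ ((p - t) / p))) (k : ℕ) :
    ∑' j, gaux a r p α x k j
      ≤ ENNReal.ofReal (γ^p * α^(-t) * 2^(p-t) * ((2:ℝ)^(-t))^k) := by
  have hp0 : 0 < p := ht.trans htp
  have hC : (0:ℝ) ≤ ((2:ℝ)^k * α)^(-p) := by positivity
  have hβ : (0:ℝ) < (2:ℝ)^(k+1) * α := by positivity
  have hsum : ∑' j, gaux a r p α x k j
      = ENNReal.ofReal (((2:ℝ)^k * α)^(-p)) *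
        (wnorm (omegaWeight a r p) p (x - Tthresh a r ((2:ℝ)^(k+1) * α) x)) ^ p := by
    have hwp : (wnorm (omegaWeight a r p) p (x - Tthresh a r ((2:ℝ)^(k+1) * α) x)) ^ p
        = ∑' j, ENNReal.ofReal ((omegaWeight a r p j) ^ p *
            |(x - Tthresh a r ((2:ℝ)^(k+1) * α) x) j| ^ p) := by
      rw [wnorm, ← ENNReal.rpow_mul, one_div_mul_cancel hp0.ne', ENNReal.rpow_one]
    rw [hwp, ← ENNReal.tsum_mul_left]
    exact tsum_congr fun j => by rw [gaux, ENNReal.ofReal_mul hC]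
  rw [hsum]
  have hb := hbound ((2:ℝ)^(k+1) * α) hβ
  have hwle : (wnorm (omegaWeight a r p) p (x - Tthresh a r ((2:ℝ)^(k+1) * α) x)) ^ p
      ≤ ENNReal.ofReal (γ^p * ((2:ℝ)^(k+1) * α)^(p-t)) := by
    calc (wnorm (omegaWeight a r p) p (x - Tthresh a r ((2:ℝ)^(k+1) * α) x)) ^ p
        ≤ (ENNReal.ofReal (γ * ((2:ℝ)^(k+1) * α) ^ ((p - t) / p))) ^ p :=
          ENNReal.rpow_le_rpow hb hp0.le
      _ = ENNReal.ofReal ((γ * ((2:ℝ)^(k+1) * α) ^ ((p - t) / p)) ^ p) :=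
          ENNReal.ofReal_rpow_of_nonneg (by positivity) hp0.le
      _ = ENNReal.ofReal (γ^p * ((2:ℝ)^(k+1) * α)^(p-t)) := by
          rw [Real.mul_rpow hγ (by positivity), ← Real.rpow_mul hβ.le,
            div_mul_cancel₀ _ hp0.ne']
  calc ENNReal.ofReal (((2:ℝ)^k * α)^(-p)) *
        (wnorm (omegaWeight a r p) p (x - Tthresh a r ((2:ℝ)^(k+1) * α) x)) ^ p
      ≤ ENNReal.ofReal (((2:ℝ)^k * α)^(-p)) *
          ENNReal.ofReal (γ^p * ((2:ℝ)^(k+1) * α)^(p-t)) := mul_le_mul_right hwle _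
    _ = ENNReal.ofReal (((2:ℝ)^k * α)^(-p) * (γ^p * ((2:ℝ)^(k+1) * α)^(p-t))) :=
        (ENNReal.ofReal_mul hC).symm
    _ = ENNReal.ofReal (γ^p * α^(-t) * 2^(p-t) * ((2:ℝ)^(-t))^k) := by
        congr 1
        linear_combination γ^p * key2 α t p hα k

theorem stmt3 (a r : Λ → ℝ) (ha : ∀ j, 0 < a j) (hr : ∀ j, 0 < r j)
    (t p : ℝ) (ht : 0 < t) (htp : t < p) (hp : p ≤ 2)
    (x : Λ → ℝ) (γ : ℝ) (hγ : 0 ≤ γ)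
    (hbound : ∀ α > (0:ℝ), wnorm (omegaWeight a r p) p (x - Tthresh a r α x) ≤
        ENNReal.ofReal (γ * α ^ ((p - t) / p))) :
    knorm a r t x ≤ ENNReal.ofReal (2 ^ (p / t) * (2 ^ t - 1) ^ (-(1 / t)) * γ ^ (p / t)) := by
  have hp0 : 0 < p := ht.trans htp
  have hq0 : (0:ℝ) ≤ 2^(-t) := by positivity
  have hq1 : (2:ℝ)^(-t) < 1 :=
    Real.rpow_lt_one_of_one_lt_of_neg (by norm_num) (by linarith)
  rw [knorm]
  refine iSup₂_le fun α hα => ?_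
  have hα : 0 < α := hα
  have hD : (0:ℝ) ≤ γ^p * α^(-t) * 2^(p-t) := by positivity
  have hEnn : (0:ℝ) ≤ γ^p * α^(-t) * 2^(p-t) * (1 - 2^(-t))⁻¹ :=
    mul_nonneg hD (inv_nonneg.2 (by linarith))
  have hE : kSum a r α x ≤ ENNReal.ofReal (γ^p * α^(-t) * 2^(p-t) * (1 - 2^(-t))⁻¹) := by
    calc kSum a r α x ≤ ∑' j, ∑' k : ℕ, gaux a r p α x k j :=
        ENNReal.tsum_le_tsum (step1 a r ha hr p α hp0 hα x)
      _ = ∑' k : ℕ, ∑' j, gaux a r p α x k j := ENNReal.tsum_comm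
      _ ≤ ∑' k : ℕ, ENNReal.ofReal (γ^p * α^(-t) * 2^(p-t) * ((2:ℝ)^(-t))^k) :=
          ENNReal.tsum_le_tsum (step2 a r t p ht htp x γ hγ α hα hbound)
      _ = ENNReal.ofReal (γ^p*α^(-t)*2^(p-t)) * ∑' k : ℕ, ENNReal.ofReal (((2:ℝ)^(-t))^k) := by
          rw [← ENNReal.tsum_mul_left]
          exact tsum_congr fun k => ENNReal.ofReal_mul hD
      _ = ENNReal.ofReal (γ^p*α^(-t)*2^(p-t)) * ENNReal.ofReal ((1 - 2^(-t))⁻¹) := by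
          rw [← ENNReal.ofReal_tsum_of_nonneg (fun k => by positivity)
            (summable_geometric_of_lt_one hq0 hq1), tsum_geometric_of_lt_one hq0 hq1]
      _ = ENNReal.ofReal (γ^p * α^(-t) * 2^(p-t) * (1 - 2^(-t))⁻¹) :=
          (ENNReal.ofReal_mul hD).symm
  calc ENNReal.ofReal α * (kSum a r α x)^(1/t)
      ≤ ENNReal.ofReal α *
          (ENNReal.ofReal (γ^p * α^(-t) * 2^(p-t) * (1 - 2^(-t))⁻¹))^(1/t) :=
        mul_le_mul_right (ENNReal.rpow_le_rpow hE (by positivity)) _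
    _ = ENNReal.ofReal (α * (γ^p * α^(-t) * 2^(p-t) * (1 - 2^(-t))⁻¹)^(1/t)) := by
        rw [ENNReal.ofReal_rpow_of_nonneg hEnn (by positivity), ← ENNReal.ofReal_mul hα.le]
    _ = ENNReal.ofReal (2 ^ (p / t) * (2 ^ t - 1) ^ (-(1 / t)) * γ ^ (p / t)) := by
        rw [key3 α t p γ hα ht htp hγ]
end
end

section
/- Assume the quotients $\bar a_j\bar r_j^{-1}$ are bounded and let $0<t<p\le 2$. Then every $x$ with $\|x\|_{k_t}<\infty$ lies in $\ell^p_{\omega_p}$, and there is a constant $M>0$ depending only on $t$, $p$ and $\sup_j \bar a_j\bar r_j^{-1}$ such that $\|x\|_{\omega_p,p}\le M\|x\|_{k_t}$ for all $x$. -/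
/-!
Put `μ_j = r_j² / a_j²` and `y_j = a_j² |x_j| / r_j`. Then `‖x‖_{ω_p,p}^p = ∑ μ_j y_j^p`, while
`kSum α x` is the `μ`-mass of `{y > α}`, so `‖x‖_{k_t}` is the weak-`ℓ^t(μ)` quasi-norm of `y`.
Bounded `a_j / r_j` means every atom has mass at least some `δ > 0`, so the weak bound `K` forces
`y_j ≤ K δ^{-1/t}`. Splitting `y` into the dyadic levels `(A 2^{-k-1}, A 2^{-k}]` below this
bound `A`, the `k`-th level contributes at most `(K 2^{k+1} / A)^t (A 2^{-k})^p`, a geometric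
sequence in `k` because `t < p`.
-/

open scoped ENNReal
noncomputable section

variable {Λ : Type*}

section WeakToStrong

variable {ι : Type*}

def tailMass (μ y : ι → ℝ) (α : ℝ) : ℝ≥0∞ :=
  ∑' j, ENNReal.ofReal (if α < y j then μ j else 0)

lemma exists_dyadic_level {y A : ℝ} (hy : 0 < y) (hyA : y ≤ A) :
    ∃ k : ℕ, A / 2 ^ (k + 1) < y ∧ y ≤ A / 2 ^ k := by
  obtain ⟨k, hk, hk'⟩ := exists_nat_pow_near ((one_le_div hy).2 hyA) one_lt_two
  exact ⟨k, (div_lt_iff₀ (by positivity)).2 (by rwa [div_lt_iff₀ hy, mul_comm] at hk'),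
    (le_div_iff₀ (by positivity)).2 (by rwa [le_div_iff₀ hy, mul_comm] at hk)⟩

lemma ofReal_mul_rpow_le_tsum_dyadic_levels {μ y A p : ℝ} (hμ : 0 ≤ μ) (hy : 0 ≤ y) (hyA : y ≤ A)
    (hp : 0 < p) :
    ENNReal.ofReal (μ * y ^ p) ≤
      ∑' k : ℕ, ENNReal.ofReal (if A / 2 ^ (k + 1) < y then μ * (A / 2 ^ k) ^ p else 0) := by
  rcases hy.eq_or_lt with rfl | hy
  · simp [Real.zero_rpow hp.ne']
  obtain ⟨k, hk, hk'⟩ := exists_dyadic_level hy hyA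
  refine le_trans ?_ (ENNReal.le_tsum k)
  rw [if_pos hk]
  gcongr

lemma tsum_dyadic_level_le {μ y : ι → ℝ} {A K t p : ℝ} (hμ : ∀ j, 0 ≤ μ j) (hA : 0 < A)
    (hK : 0 ≤ K) (hweak : ∀ α > 0, tailMass μ y α ≤ ENNReal.ofReal ((K / α) ^ t)) (k : ℕ) :
    ∑' j, ENNReal.ofReal (if A / 2 ^ (k + 1) < y j then μ j * (A / 2 ^ k) ^ p else 0) ≤
      ENNReal.ofReal (K ^ t * A ^ (p - t) * 2 ^ t * (2 ^ (t - p)) ^ k) := by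
  calc ∑' j, ENNReal.ofReal (if A / 2 ^ (k + 1) < y j then μ j * (A / 2 ^ k) ^ p else 0)
      = tailMass μ y (A / 2 ^ (k + 1)) * ENNReal.ofReal ((A / 2 ^ k) ^ p) := by
        rw [tailMass, ← ENNReal.tsum_mul_right]
        congr 1 with j
        split_ifs
        · exact ENNReal.ofReal_mul (hμ j)
        · simp
    _ ≤ ENNReal.ofReal ((K / (A / 2 ^ (k + 1))) ^ t) * ENNReal.ofReal ((A / 2 ^ k) ^ p) := by
        gcongr
        exact hweak _ (by positivity)
    _ = _ := by
        have h2k : ∀ s : ℝ, ((2 : ℝ) ^ k) ^ s = ((2 : ℝ) ^ s) ^ k := fun s =>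
          (Real.rpow_pow_comm zero_le_two s k).symm
        have hdiv : K / (A / 2 ^ (k + 1)) = K * 2 * 2 ^ k / A := by field_simp; ring
        rw [← ENNReal.ofReal_mul (by positivity), hdiv, Real.div_rpow (by positivity) hA.le,
          Real.div_rpow hA.le (by positivity), Real.mul_rpow (by positivity) (by positivity),
          Real.mul_rpow hK zero_le_two, h2k, h2k, Real.rpow_sub hA, Real.rpow_sub two_pos, div_pow]
        have : (0 : ℝ) < A ^ t := by positivity
        have : (0 : ℝ) < ((2 : ℝ) ^ p) ^ k := by positivity
        field_simp

theorem tsum_mul_rpow_le_of_tailMass_le_of_forall_le {μ y : ι → ℝ} {A K t p : ℝ}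
    (hμ : ∀ j, 0 ≤ μ j) (hy : ∀ j, 0 ≤ y j) (hyA : ∀ j, y j ≤ A) (hA : 0 < A) (hK : 0 ≤ K)
    (htp : t < p) (hp : 0 < p) (hweak : ∀ α > 0, tailMass μ y α ≤ ENNReal.ofReal ((K / α) ^ t)) :
    ∑' j, ENNReal.ofReal (μ j * y j ^ p) ≤
      ENNReal.ofReal (K ^ t * A ^ (p - t) * 2 ^ t / (1 - 2 ^ (t - p))) := by
  set B := K ^ t * A ^ (p - t) * 2 ^ t
  set q : ℝ := 2 ^ (t - p)
  have hq : q < 1 := Real.rpow_lt_one_of_one_lt_of_neg one_lt_two (by linarith)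
  calc ∑' j, ENNReal.ofReal (μ j * y j ^ p)
      ≤ ∑' j, ∑' k : ℕ,
          ENNReal.ofReal (if A / 2 ^ (k + 1) < y j then μ j * (A / 2 ^ k) ^ p else 0) :=
        ENNReal.tsum_le_tsum fun j => ofReal_mul_rpow_le_tsum_dyadic_levels (hμ j) (hy j) (hyA j) hp
    _ = ∑' k : ℕ, ∑' j,
          ENNReal.ofReal (if A / 2 ^ (k + 1) < y j then μ j * (A / 2 ^ k) ^ p else 0) :=
        ENNReal.tsum_comm
    _ ≤ ∑' k : ℕ, ENNReal.ofReal (B * q ^ k) :=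
        ENNReal.tsum_le_tsum fun k => tsum_dyadic_level_le hμ hA hK hweak k
    _ = ENNReal.ofReal (B / (1 - q)) := by
        have hB : 0 ≤ B := by positivity
        have hq0 : 0 ≤ q := by positivity
        rw [← ENNReal.ofReal_tsum_of_nonneg (fun k => by positivity)
          ((summable_geometric_of_lt_one hq0 hq).mul_left B), tsum_mul_left,
          tsum_geometric_of_lt_one hq0 hq, div_eq_mul_inv]

lemma le_div_rpow_of_tailMass_le {μ y : ι → ℝ} {δ K t : ℝ} (hδ : 0 < δ) (hμ : ∀ j, δ ≤ μ j)
    (hK : 0 ≤ K) (ht : 0 < t) (hweak : ∀ α > 0, tailMass μ y α ≤ ENNReal.ofReal ((K / α) ^ t))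
    (j : ι) : y j ≤ K / δ ^ t⁻¹ := by
  by_contra! hj
  obtain ⟨α, hKα, hαy⟩ := exists_between hj
  have hα : 0 < α := lt_of_le_of_lt (by positivity) hKα
  have hmass : ENNReal.ofReal δ ≤ ENNReal.ofReal ((K / α) ^ t) := by
    calc ENNReal.ofReal δ ≤ ENNReal.ofReal (if α < y j then μ j else 0) := by
          rw [if_pos hαy]; exact ENNReal.ofReal_le_ofReal (hμ j)
      _ ≤ tailMass μ y α := ENNReal.le_tsum j
      _ ≤ _ := hweak α hα
  rw [ENNReal.ofReal_le_ofReal_iff (by positivity)] at hmass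
  have : δ ^ t⁻¹ ≤ K / α := by
    simpa [Real.rpow_rpow_inv (by positivity : 0 ≤ K / α) ht.ne'] using
      Real.rpow_le_rpow hδ.le hmass (inv_nonneg.2 ht.le)
  rw [le_div_iff₀ hα, ← le_div_iff₀' (by positivity)] at this
  linarith

theorem tsum_mul_rpow_le_of_tailMass_le {μ y : ι → ℝ} {δ K t p : ℝ} (hδ : 0 < δ)
    (hμ : ∀ j, δ ≤ μ j) (hy : ∀ j, 0 ≤ y j) (hK : 0 ≤ K) (ht : 0 < t) (htp : t < p)
    (hweak : ∀ α > 0, tailMass μ y α ≤ ENNReal.ofReal ((K / α) ^ t)) :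
    ∑' j, ENNReal.ofReal (μ j * y j ^ p) ≤
      ENNReal.ofReal (K ^ p * (2 ^ t / ((1 - 2 ^ (t - p)) * (δ ^ t⁻¹) ^ (p - t)))) := by
  have hp : 0 < p := ht.trans htp
  have hyA := le_div_rpow_of_tailMass_le hδ hμ hK ht hweak
  rcases hK.eq_or_lt with rfl | hK
  · have hy0 : ∀ j, y j = 0 := fun j => le_antisymm (by simpa using hyA j) (hy j)
    simp [hy0, Real.zero_rpow hp.ne']
  have hμ0 : ∀ j, 0 ≤ μ j := fun j => hδ.le.trans (hμ j)
  convert tsum_mul_rpow_le_of_tailMass_le_of_forall_le hμ0 hy hyA (by positivity) hK.le htp hp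
    hweak using 2
  rw [Real.div_rpow hK.le (by positivity), ← add_sub_cancel t p, Real.rpow_add hK,
    add_sub_cancel_left, mul_comm (1 - _), ← div_div]
  ring

end WeakToStrong

lemma kSum_eq_tailMass {a r : Λ → ℝ} (ha : ∀ j, 0 < a j) (hr : ∀ j, 0 < r j) (α : ℝ)
    (x : Λ → ℝ) :
    kSum a r α x = tailMass (fun j => r j ^ 2 / a j ^ 2) (fun j => |x j| * a j ^ 2 / r j) α := by
  refine tsum_congr fun j => ?_
  simp only [div_lt_iff₀ (pow_pos (ha j) 2), lt_div_iff₀ (hr j), mul_comm (r j) α]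

lemma kSum_le_of_knorm_ne_top {a r x : Λ → ℝ} {t α : ℝ} (ht : 0 < t) (hα : 0 < α)
    (hK : knorm a r t x ≠ ⊤) :
    kSum a r α x ≤ ENNReal.ofReal (((knorm a r t x).toReal / α) ^ t) := by
  have h : ENNReal.ofReal α * kSum a r α x ^ (1 / t) ≤ knorm a r t x :=
    le_iSup₂ (f := fun β (_ : β ∈ Set.Ioi (0 : ℝ)) => ENNReal.ofReal β * kSum a r β x ^ (1 / t))
      α hα
  rw [← ENNReal.ofReal_toReal hK, mul_comm, ← ENNReal.le_div_iff_mul_le (by simp [hα])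
    (by simp), ← ENNReal.ofReal_div_of_pos hα, one_div, ENNReal.rpow_inv_le_iff ht] at h
  rwa [ENNReal.ofReal_rpow_of_nonneg (by positivity) ht.le] at h

lemma omegaWeight_rpow_mul_abs_rpow {a r : Λ → ℝ} (ha : ∀ j, 0 < a j) (hr : ∀ j, 0 < r j)
    {p : ℝ} (hp : 0 < p) (x : Λ → ℝ) (j : Λ) :
    omegaWeight a r p j ^ p * |x j| ^ p = r j ^ 2 / a j ^ 2 * (|x j| * a j ^ 2 / r j) ^ p := by
  have ha := ha j
  have hr := hr j
  rw [omegaWeight, ← Real.rpow_mul (by positivity), one_div, inv_mul_cancel₀ hp.ne',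
    Real.rpow_one, Real.div_rpow (by positivity) hr.le, Real.mul_rpow (by positivity)
    (by positivity), Real.rpow_sub hr, Real.rpow_sub ha, Real.rpow_two, Real.rpow_two,
    Real.rpow_mul ha.le, Real.rpow_two]
  have : 0 < r j ^ p := by positivity
  field_simp

theorem stmt4_general (a r : Λ → ℝ) (ha : ∀ j, 0 < a j) (hr : ∀ j, 0 < r j)
    (t p : ℝ) (ht : 0 < t) (htp : t < p)
    (hbd : ∃ C : ℝ, ∀ j, a j / r j ≤ C) :
    ∃ M > (0:ℝ), ∀ x : Λ → ℝ,
      wnorm (omegaWeight a r p) p x ≤ ENNReal.ofReal M * knorm a r t x := by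
  obtain ⟨C, hC⟩ := hbd
  set c := max C 1
  have hc : 0 < c := lt_max_of_lt_right one_pos
  have hμ : ∀ j, (c ^ 2)⁻¹ ≤ r j ^ 2 / a j ^ 2 := fun j => by
    rw [← inv_pow, ← div_pow, ← inv_div]
    gcongr
    · exact div_pos (ha j) (hr j)
    · exact (hC j).trans (le_max_left _ _)
  have hp : 0 < p := ht.trans htp
  have hq : (2 : ℝ) ^ (t - p) < 1 := Real.rpow_lt_one_of_one_lt_of_neg one_lt_two (by linarith)
  set D : ℝ := 2 ^ t / ((1 - 2 ^ (t - p)) * (((c ^ 2)⁻¹) ^ t⁻¹) ^ (p - t))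
  have hD : 0 < D := div_pos (by positivity) (mul_pos (sub_pos.2 hq) (by positivity))
  refine ⟨D ^ (1 / p), by positivity, fun x => ?_⟩
  by_cases hK : knorm a r t x = ⊤
  · rw [hK, ENNReal.mul_top (ENNReal.ofReal_pos.2 (by positivity)).ne']
    exact le_top
  have hsum := tsum_mul_rpow_le_of_tailMass_le (by positivity) hμ
    (fun j => div_nonneg (by positivity) (hr j).le) ENNReal.toReal_nonneg ht htp
    fun α hα => kSum_eq_tailMass ha hr α x ▸ kSum_le_of_knorm_ne_top ht hα hK
  simp only [← omegaWeight_rpow_mul_abs_rpow ha hr hp] at hsum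
  calc wnorm (omegaWeight a r p) p x
      = (∑' j, ENNReal.ofReal (omegaWeight a r p j ^ p * |x j| ^ p)) ^ (1 / p) := rfl
    _ ≤ ENNReal.ofReal ((knorm a r t x).toReal ^ p * D) ^ (1 / p) := by gcongr
    _ = ENNReal.ofReal (D ^ (1 / p)) * knorm a r t x := by
      rw [ENNReal.ofReal_rpow_of_nonneg (by positivity) (by positivity),
        Real.mul_rpow (by positivity) hD.le, ← Real.rpow_mul ENNReal.toReal_nonneg,
        mul_one_div_cancel hp.ne', Real.rpow_one, mul_comm, ENNReal.ofReal_mul (by positivity),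
        ENNReal.ofReal_toReal hK]

theorem stmt4 (a r : Λ → ℝ) (ha : ∀ j, 0 < a j) (hr : ∀ j, 0 < r j)
    (t p : ℝ) (ht : 0 < t) (htp : t < p) (hp : p ≤ 2)
    (hbd : ∃ C : ℝ, ∀ j, a j / r j ≤ C) :
    ∃ M > (0:ℝ), ∀ x : Λ → ℝ,
      wnorm (omegaWeight a r p) p x ≤ ENNReal.ofReal M * knorm a r t x :=
  stmt4_general a r ha hr t p ht htp hbd
end
end

section
/- (Bernstein inequality) Let $t\in(0,2)$, $x^+$ with $\|x^+\|_{k_t}<\infty$, and $\alpha>0$. Let $P_\alpha$ be the coordinate projection onto $\Lambda_\alpha=\{j:\bar a_j^{-2}\bar r_j\alpha<|x^+_j|\}$. Then for every sequence $x$, $\sum_{j\in\Lambda_\alpha}\bar r_j|x_j| \le \|x^+\|_{k_t}^{t/2}\,\alpha^{-t/2}\,(\sum_{j\in\Lambda}\bar a_j^2|x_j|^2)^{1/2}$. -/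
/-! On `Λ_α` write `r_j |x_j| = (r_j / a_j) · (a_j |x_j|)`. Cauchy–Schwarz bounds the sum by
`(∑_{Λ_α} r_j² / a_j²)^{1/2} ‖x‖_{a,2}`, and since `‖x⁺‖_{k_t}` is a supremum over all thresholds,
`∑_{Λ_α} r_j² / a_j² ≤ (‖x⁺‖_{k_t} / α)^t`. -/

open scoped ENNReal
noncomputable section

variable {Λ : Type*}

open MeasureTheory in
/-- Cauchy–Schwarz in `ℝ≥0∞`, where no summability hypotheses are needed. -/
theorem ENNReal.tsum_sqrt_mul_le {ι : Type*} (f g : ι → ℝ≥0∞) :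
    ∑' i, (f i * g i) ^ (1 / 2 : ℝ) ≤ (∑' i, f i) ^ (1 / 2 : ℝ) * (∑' i, g i) ^ (1 / 2 : ℝ) := by
  let _ : MeasurableSpace ι := ⊤
  have sq_sqrt : ∀ y : ℝ≥0∞, (y ^ (1 / 2 : ℝ)) ^ (2 : ℝ) = y := fun y => by
    rw [← ENNReal.rpow_mul]; norm_num
  have holder := ENNReal.lintegral_mul_le_Lp_mul_Lq Measure.count Real.HolderConjugate.two_two
    (f := fun i => f i ^ (1 / 2 : ℝ)) (g := fun i => g i ^ (1 / 2 : ℝ))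
    measurable_from_top.aemeasurable measurable_from_top.aemeasurable
  simpa only [lintegral_count, Pi.mul_apply, sq_sqrt,
    ← ENNReal.mul_rpow_of_nonneg _ _ (by norm_num : (0 : ℝ) ≤ 1 / 2)] using holder

theorem ofReal_ite_le_sqrt_mul {a r y : ℝ} (ha : a ≠ 0) (p : Prop) [Decidable p] :
    ENNReal.ofReal (if p then r * |y| else 0) ≤
      (ENNReal.ofReal (if p then r ^ 2 / a ^ 2 else 0) * ENNReal.ofReal (a ^ 2 * y ^ 2))
        ^ (1 / 2 : ℝ) := by
  split_ifs
  · rw [← ENNReal.ofReal_mul (by positivity),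
      ENNReal.ofReal_rpow_of_nonneg (by positivity) (by norm_num), ← Real.sqrt_eq_rpow,
      show r ^ 2 / a ^ 2 * (a ^ 2 * y ^ 2) = (r * y) ^ 2 by field_simp, Real.sqrt_sq_eq_abs,
      abs_mul]
    exact ENNReal.ofReal_le_ofReal (mul_le_mul_of_nonneg_right (le_abs_self r) (abs_nonneg y))
  · simp

theorem kSum_rpow_le_knorm_div (a r : Λ → ℝ) (t : ℝ) (x : Λ → ℝ) {α : ℝ} (hα : 0 < α) :
    kSum a r α x ^ (1 / t) ≤ knorm a r t x / ENNReal.ofReal α := by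
  rw [ENNReal.le_div_iff_mul_le (Or.inl (by simpa using hα)) (Or.inl ENNReal.ofReal_ne_top),
    mul_comm]
  exact le_iSup₂ (f := fun β (_ : β ∈ Set.Ioi (0 : ℝ)) => ENNReal.ofReal β * kSum a r β x ^ (1 / t))
    α hα

theorem ENNReal.div_ofReal_rpow {c : ℝ≥0∞} {α s : ℝ} (hα : 0 < α) (hs : 0 ≤ s) :
    (c / ENNReal.ofReal α) ^ s = c ^ s * ENNReal.ofReal (α ^ (-s)) := by
  rw [ENNReal.div_rpow_of_nonneg _ _ hs, ENNReal.ofReal_rpow_of_pos hα, div_eq_mul_inv,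
    Real.rpow_neg hα.le, ENNReal.ofReal_inv_of_pos (Real.rpow_pos_of_pos hα _)]

theorem stmt5_general (a r : Λ → ℝ) (ha : ∀ j, 0 < a j)
    (t : ℝ) (ht : t ∈ Set.Ioo (0:ℝ) 2)
    (xplus : Λ → ℝ)
    (α : ℝ) (hα : 0 < α) (x : Λ → ℝ) :
    ∑' j, ENNReal.ofReal (if r j * α / a j ^ 2 < |xplus j| then r j * |x j| else 0) ≤
      knorm a r t xplus ^ (t / 2) * ENNReal.ofReal (α ^ (-(t / 2))) * anorm2 a x := by
  have ht0 : 0 < t := ht.1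
  calc _ ≤ kSum a r α xplus ^ (1 / 2 : ℝ) * anorm2 a x :=
        (ENNReal.tsum_le_tsum fun j => ofReal_ite_le_sqrt_mul (ha j).ne' _).trans
          (ENNReal.tsum_sqrt_mul_le _ _)
    _ = (kSum a r α xplus ^ (1 / t)) ^ (t / 2) * anorm2 a x := by
        rw [← ENNReal.rpow_mul, one_div_mul_eq_div, div_div_cancel_left' ht0.ne', one_div]
    _ ≤ (knorm a r t xplus / ENNReal.ofReal α) ^ (t / 2) * anorm2 a x := by
        gcongr
        exact kSum_rpow_le_knorm_div a r t xplus hα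
    _ = _ := by rw [ENNReal.div_ofReal_rpow hα (by positivity)]

theorem stmt5 (a r : Λ → ℝ) (ha : ∀ j, 0 < a j) (hr : ∀ j, 0 < r j)
    (t : ℝ) (ht : t ∈ Set.Ioo (0:ℝ) 2)
    (xplus : Λ → ℝ) (hk : knorm a r t xplus ≠ ⊤)
    (α : ℝ) (hα : 0 < α) (x : Λ → ℝ) :
    ∑' j, ENNReal.ofReal (if r j * α / a j ^ 2 < |xplus j| then r j * |x j| else 0) ≤
      knorm a r t xplus ^ (t / 2) * ENNReal.ofReal (α ^ (-(t / 2))) * anorm2 a x :=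
  stmt5_general a r ha t ht xplus α hα x
end
end

section
/- Let $t\in(0,1)$ and $x^+\in\ell^1_{\bar r}$ with $\|x^+\|_{k_t}<\infty$. Then for all $x\in\ell^1_{\bar r}$ and all $\alpha>0$, $\|x^+-x\|_{\bar r,1}+\|x^+\|_{\bar r,1}-\|x\|_{\bar r,1} \le 2\|x^+\|_{k_t}^{t/2}\alpha^{-t/2}\|x^+-x\|_{\bar a,2} + 4(2^{1-t}-1)^{-1}\|x^+\|_{k_t}^{t}\alpha^{1-t}$. -/
open scoped ENNReal
noncomputable section

variable {Λ : Type*}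

/-!
Split the sum according to whether `j` lies in `S = {j : a_j⁻² r_j α < |x⁺_j|}`: termwise,
`|x⁺_j - x_j| + |x⁺_j| - |x_j|` is at most both `2 |x⁺_j - x_j|` and `2 |x⁺_j|`.
On `S`, Cauchy–Schwarz with the weights `r_j / a_j` and `a_j` bounds the first sum by
`kSum(α)^{1/2} ‖x⁺ - x‖_{a,2}`, and the definition of the weak norm gives
`kSum(β) ≤ ‖x⁺‖_{k_t}^t β^{-t}`.
Off `S`, `r_j |x⁺_j| = ∫_0^α (r_j² / a_j²) 𝟙{β < a_j² |x⁺_j| / r_j} dβ`, so the second sum is at most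
`∫_0^α kSum(β) dβ ≤ ‖x⁺‖_{k_t}^t α^{1-t} / (1 - t)`; Bernoulli's inequality `2^{1-t} ≤ 2 - t`
turns `2 / (1 - t)` into the constant `4 (2^{1-t} - 1)⁻¹`.
-/

open MeasureTheory Set

theorem ENNReal.inner_le_Lp_mul_Lq_tsum {ι : Type*} {p q : ℝ} (hpq : p.HolderConjugate q)
    (f g : ι → ℝ≥0∞) :
    ∑' i, f i * g i ≤ (∑' i, f i ^ p) ^ (1 / p) * (∑' i, g i ^ q) ^ (1 / q) := by
  let _ : MeasurableSpace ι := ⊤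
  have : MeasurableSingletonClass ι := ⟨fun _ => trivial⟩
  simpa only [lintegral_count, Pi.mul_apply] using
    ENNReal.lintegral_mul_le_Lp_mul_Lq (Measure.count : Measure ι) hpq
      measurable_from_top.aemeasurable measurable_from_top.aemeasurable

theorem tsum_lintegral_le_lintegral_tsum {ι α : Type*} [MeasurableSpace α] {μ : Measure α}
    {f : ι → α → ℝ≥0∞} (hf : ∀ i, AEMeasurable (f i) μ) :
    ∑' i, ∫⁻ x, f i x ∂μ ≤ ∫⁻ x, ∑' i, f i x ∂μ := by
  rw [ENNReal.tsum_eq_iSup_sum]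
  refine iSup_le fun s => ?_
  rw [← lintegral_finsetSum' s fun i _ => hf i]
  exact lintegral_mono fun x => ENNReal.sum_le_tsum s

theorem setLIntegral_Ioc_ite_lt {c y α : ℝ} (hy : y ≤ α) :
    ∫⁻ β in Ioc 0 α, ENNReal.ofReal (if β < y then c else 0) =
      ENNReal.ofReal c * ENNReal.ofReal y := by
  have hIoo : Iio y ∩ Ioc 0 α = Ioo 0 y := by
    ext β
    simp only [mem_inter_iff, mem_Iio, mem_Ioc, mem_Ioo]
    constructor
    · rintro ⟨hβy, hβ, -⟩; exact ⟨hβ, hβy⟩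
    · rintro ⟨hβ, hβy⟩; exact ⟨hβy, hβ, hβy.le.trans hy⟩
  calc ∫⁻ β in Ioc 0 α, ENNReal.ofReal (if β < y then c else 0)
      = ∫⁻ β in Ioc 0 α, (Iio y).indicator (fun _ => ENNReal.ofReal c) β := by
        congr 1 with β
        by_cases hβ : β < y <;> simp [hβ]
    _ = ENNReal.ofReal c * ENNReal.ofReal y := by
        rw [lintegral_indicator measurableSet_Iio, setLIntegral_const,
          Measure.restrict_apply measurableSet_Iio, hIoo, Real.volume_Ioo, sub_zero]

theorem setLIntegral_Ioc_rpow_neg {t α : ℝ} (ht : t < 1) (hα : 0 ≤ α) :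
    ∫⁻ β in Ioc 0 α, ENNReal.ofReal (β ^ (-t)) = ENNReal.ofReal (α ^ (1 - t) / (1 - t)) := by
  have hint : IntegrableOn (fun β : ℝ => β ^ (-t)) (Ioc 0 α) := by
    have := intervalIntegral.intervalIntegrable_rpow' (a := 0) (b := α) (r := -t) (by linarith)
    rwa [intervalIntegrable_iff, uIoc_of_le hα] at this
  rw [← ofReal_integral_eq_lintegral_ofReal hint
    (ae_restrict_of_forall_mem measurableSet_Ioc fun β hβ => Real.rpow_nonneg hβ.1.le _),
    ← intervalIntegral.integral_of_le hα, integral_rpow (Or.inl (by linarith)),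
    Real.zero_rpow (by linarith), neg_add_eq_sub]
  ring_nf

theorem ofReal_tsum_sub_eq_tsum_ofReal {r u v : Λ → ℝ} (hr : ∀ j, 0 ≤ r j)
    (hu : Summable fun j => r j * |u j|) (hv : Summable fun j => r j * |v j|) :
    ENNReal.ofReal ((∑' j, r j * |u j - v j|) + (∑' j, r j * |u j|) - ∑' j, r j * |v j|) =
      ∑' j, ENNReal.ofReal (r j * |u j - v j| + r j * |u j| - r j * |v j|) := by
  have huv : Summable fun j => r j * |u j - v j| :=
    (hu.add hv).of_nonneg_of_le (fun j => mul_nonneg (hr j) (abs_nonneg _)) fun j => by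
      rw [← mul_add]; exact mul_le_mul_of_nonneg_left (abs_sub _ _) (hr j)
  have hnonneg : ∀ j, 0 ≤ r j * |u j - v j| + r j * |u j| - r j * |v j| := fun j => by
    have := abs_sub_abs_le_abs_sub (v j) (u j)
    rw [abs_sub_comm (v j)] at this
    nlinarith [hr j]
  rw [← huv.tsum_add hu, ← (huv.add hu).tsum_sub hv,
    ENNReal.ofReal_tsum_of_nonneg hnonneg ((huv.add hu).sub hv)]

theorem ofReal_mul_abs_sub_add_le {r u v : ℝ} (hr : 0 ≤ r) (p : Prop) [Decidable p] :
    ENNReal.ofReal (r * |u - v| + r * |u| - r * |v|) ≤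
      2 * ENNReal.ofReal (if p then r * |u - v| else 0) +
        2 * ENNReal.ofReal (if p then 0 else r * |u|) := by
  have h₁ := abs_sub_abs_le_abs_sub u v
  have h₂ := abs_sub u v
  split_ifs <;>
  · simp only [ENNReal.ofReal_zero, mul_zero, add_zero, zero_add]
    rw [← ENNReal.ofReal_ofNat, ← ENNReal.ofReal_mul zero_le_two]
    exact ENNReal.ofReal_le_ofReal (by nlinarith)

theorem two_div_le_four_mul_inv_two_rpow_sub_one {s : ℝ} (hs0 : 0 < s) (hs1 : s ≤ 1) :
    2 / s ≤ 4 * (2 ^ s - 1)⁻¹ := by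
  have hpos : 0 < (2 : ℝ) ^ s - 1 := sub_pos.2 (Real.one_lt_rpow (by norm_num) hs0)
  have hbernoulli : (2 : ℝ) ^ s ≤ 1 + s * 1 := by
    simpa [one_add_one_eq_two] using
      rpow_one_add_le_one_add_mul_self (s := 1) (by norm_num) hs0.le hs1
  rw [← div_eq_mul_inv, div_le_div_iff₀ hs0 hpos]
  linarith

theorem kSum_le_knorm_rpow_mul (a r : Λ → ℝ) {t : ℝ} (ht : 0 < t) (x : Λ → ℝ) {β : ℝ}
    (hβ : 0 < β) : kSum a r β x ≤ knorm a r t x ^ t * ENNReal.ofReal (β ^ (-t)) := by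
  have hsup : ENNReal.ofReal β * kSum a r β x ^ (1 / t) ≤ knorm a r t x :=
    le_iSup₂ (f := fun α (_ : α ∈ Ioi 0) => ENNReal.ofReal α * kSum a r α x ^ (1 / t)) β hβ
  have hroot : kSum a r β x ^ (1 / t) ≤ knorm a r t x / ENNReal.ofReal β := by
    rw [ENNReal.le_div_iff_mul_le (by simp [hβ]) (by simp), mul_comm]
    exact hsup
  calc kSum a r β x = (kSum a r β x ^ (1 / t)) ^ t := by
        rw [← ENNReal.rpow_mul, one_div_mul_cancel ht.ne', ENNReal.rpow_one]
    _ ≤ (knorm a r t x / ENNReal.ofReal β) ^ t := ENNReal.rpow_le_rpow hroot ht.le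
    _ = knorm a r t x ^ t * ENNReal.ofReal (β ^ (-t)) := by
        rw [ENNReal.div_rpow_of_nonneg _ _ ht.le, ENNReal.ofReal_rpow_of_pos hβ, div_eq_mul_inv,
          ← ENNReal.ofReal_inv_of_pos (by positivity), Real.rpow_neg hβ.le]

theorem kSum_rpow_half_le (a r : Λ → ℝ) {t : ℝ} (ht : 0 < t) (x : Λ → ℝ) {β : ℝ}
    (hβ : 0 < β) :
    kSum a r β x ^ (1 / 2 : ℝ) ≤ knorm a r t x ^ (t / 2) * ENNReal.ofReal (β ^ (-(t / 2))) := by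
  calc kSum a r β x ^ (1 / 2 : ℝ)
      ≤ (knorm a r t x ^ t * ENNReal.ofReal (β ^ (-t))) ^ (1 / 2 : ℝ) :=
        ENNReal.rpow_le_rpow (kSum_le_knorm_rpow_mul a r ht x hβ) (by norm_num)
    _ = knorm a r t x ^ (t / 2) * ENNReal.ofReal (β ^ (-(t / 2))) := by
        rw [ENNReal.mul_rpow_of_nonneg _ _ (by norm_num), ← ENNReal.rpow_mul,
          ENNReal.ofReal_rpow_of_nonneg (by positivity) (by norm_num), ← Real.rpow_mul hβ.le]
        ring_nf

theorem tsum_large_le_kSum_rpow_half_mul_anorm2 {a r : Λ → ℝ} (ha : ∀ j, 0 < a j)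
    (hr : ∀ j, 0 ≤ r j) (α : ℝ) (x d : Λ → ℝ) :
    ∑' j, ENNReal.ofReal (if r j * α / a j ^ 2 < |x j| then r j * |d j| else 0) ≤
      kSum a r α x ^ (1 / 2 : ℝ) * anorm2 a d := by
  have hfactor : ∀ j, ENNReal.ofReal (if r j * α / a j ^ 2 < |x j| then r j * |d j| else 0) =
      ENNReal.ofReal (if r j * α / a j ^ 2 < |x j| then r j / a j else 0) *
        ENNReal.ofReal (a j * |d j|) := by
    intro j
    have := ha j
    split_ifs
    · rw [← ENNReal.ofReal_mul (div_nonneg (hr j) this.le)]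
      congr 1
      field_simp
    · simp
  have hweight : ∀ j,
      ENNReal.ofReal (if r j * α / a j ^ 2 < |x j| then r j / a j else 0) ^ (2 : ℝ) =
        ENNReal.ofReal (if r j * α / a j ^ 2 < |x j| then r j ^ 2 / a j ^ 2 else 0) := by
    intro j
    have := ha j
    split_ifs
    · rw [ENNReal.ofReal_rpow_of_nonneg (div_nonneg (hr j) this.le) (by norm_num),
        Real.rpow_two, div_pow]
    · simp
  have hdiff : ∀ j, ENNReal.ofReal (a j * |d j|) ^ (2 : ℝ) = ENNReal.ofReal (a j ^ 2 * d j ^ 2) := by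
    intro j
    have := ha j
    rw [ENNReal.ofReal_rpow_of_nonneg (by positivity) (by norm_num), Real.rpow_two, mul_pow,
      sq_abs]
  simp_rw [hfactor]
  refine (ENNReal.inner_le_Lp_mul_Lq_tsum .two_two _ _).trans_eq ?_
  simp_rw [hweight, hdiff]
  rfl

theorem ofReal_mul_abs_eq_setLIntegral {a r u α : ℝ} (ha : 0 < a) (hr : 0 < r)
    (hsmall : ¬ r * α / a ^ 2 < |u|) :
    ENNReal.ofReal (r * |u|) =
      ∫⁻ β in Ioc 0 α, ENNReal.ofReal (if r * β / a ^ 2 < |u| then r ^ 2 / a ^ 2 else 0) := by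
  have hcond : ∀ β, r * β / a ^ 2 < |u| ↔ β < a ^ 2 * |u| / r := fun β => by
    rw [div_lt_iff₀ (by positivity), lt_div_iff₀ hr, mul_comm r, mul_comm (a ^ 2)]
  simp_rw [hcond]
  rw [setLIntegral_Ioc_ite_lt (not_lt.1 ((hcond α).not.1 hsmall)),
    ← ENNReal.ofReal_mul (by positivity)]
  congr 1
  field_simp

theorem tsum_small_le_lintegral_kSum {a r : Λ → ℝ} (ha : ∀ j, 0 < a j) (hr : ∀ j, 0 < r j)
    (α : ℝ) (x : Λ → ℝ) :
    ∑' j, ENNReal.ofReal (if r j * α / a j ^ 2 < |x j| then 0 else r j * |x j|) ≤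
      ∫⁻ β in Ioc 0 α, kSum a r β x := by
  calc ∑' j, ENNReal.ofReal (if r j * α / a j ^ 2 < |x j| then 0 else r j * |x j|)
      ≤ ∑' j, ∫⁻ β in Ioc 0 α,
          ENNReal.ofReal (if r j * β / a j ^ 2 < |x j| then r j ^ 2 / a j ^ 2 else 0) := by
        refine ENNReal.tsum_le_tsum fun j => ?_
        split_ifs with hlarge
        · simp
        · exact (ofReal_mul_abs_eq_setLIntegral (ha j) (hr j) hlarge).le
    _ ≤ ∫⁻ β in Ioc 0 α, kSum a r β x :=
        tsum_lintegral_le_lintegral_tsum fun j =>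
          (Measurable.ite (measurableSet_lt (by fun_prop) measurable_const) measurable_const
            measurable_const).ennreal_ofReal.aemeasurable

theorem lintegral_kSum_le (a r : Λ → ℝ) {t : ℝ} (ht : t ∈ Ioo 0 1) (x : Λ → ℝ) {α : ℝ}
    (hα : 0 ≤ α) :
    ∫⁻ β in Ioc 0 α, kSum a r β x ≤
      knorm a r t x ^ t * ENNReal.ofReal (α ^ (1 - t) / (1 - t)) := by
  calc ∫⁻ β in Ioc 0 α, kSum a r β x
      ≤ ∫⁻ β in Ioc 0 α, knorm a r t x ^ t * ENNReal.ofReal (β ^ (-t)) :=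
        setLIntegral_mono (by fun_prop) fun β hβ => kSum_le_knorm_rpow_mul a r ht.1 x hβ.1
    _ = knorm a r t x ^ t * ENNReal.ofReal (α ^ (1 - t) / (1 - t)) := by
        rw [lintegral_const_mul _ (by fun_prop), setLIntegral_Ioc_rpow_neg ht.2 hα]

theorem stmt6_general (a r : Λ → ℝ) (ha : ∀ j, 0 < a j) (hr : ∀ j, 0 < r j)
    (t : ℝ) (ht : t ∈ Set.Ioo (0:ℝ) 1)
    (xplus : Λ → ℝ) (hx1 : Summable fun j => r j * |xplus j|)
    (x : Λ → ℝ) (hx : Summable fun j => r j * |x j|) (α : ℝ) (hα : 0 < α) :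
    ENNReal.ofReal ((∑' j, r j * |xplus j - x j|) + (∑' j, r j * |xplus j|)
        - ∑' j, r j * |x j|) ≤
      2 * knorm a r t xplus ^ (t / 2) * ENNReal.ofReal (α ^ (-(t / 2))) *
          anorm2 a (xplus - x)
        + ENNReal.ofReal (4 * (2 ^ (1 - t) - 1)⁻¹) * knorm a r t xplus ^ t *
          ENNReal.ofReal (α ^ (1 - t)) := by
  set K := knorm a r t xplus
  have hconst : 2 * ENNReal.ofReal (α ^ (1 - t) / (1 - t)) ≤
      ENNReal.ofReal (4 * (2 ^ (1 - t) - 1)⁻¹) * ENNReal.ofReal (α ^ (1 - t)) := by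
    have := two_div_le_four_mul_inv_two_rpow_sub_one (sub_pos.2 ht.2) (by linarith [ht.1])
    rw [← ENNReal.ofReal_ofNat, ← ENNReal.ofReal_mul zero_le_two,
      ← ENNReal.ofReal_mul ((div_nonneg zero_le_two (sub_pos.2 ht.2).le).trans this)]
    exact ENNReal.ofReal_le_ofReal (by rw [mul_div, mul_div_right_comm]; gcongr)
  rw [ofReal_tsum_sub_eq_tsum_ofReal (fun j => (hr j).le) hx1 hx]
  calc _ ≤ _ := ENNReal.tsum_le_tsum fun j =>
        ofReal_mul_abs_sub_add_le (hr j).le (r j * α / a j ^ 2 < |xplus j|)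
    _ = 2 * ∑' j, ENNReal.ofReal
            (if r j * α / a j ^ 2 < |xplus j| then r j * |xplus j - x j| else 0) +
          2 * ∑' j, ENNReal.ofReal
            (if r j * α / a j ^ 2 < |xplus j| then 0 else r j * |xplus j|) := by
        rw [ENNReal.tsum_add, ENNReal.tsum_mul_left, ENNReal.tsum_mul_left]
    _ ≤ 2 * (K ^ (t / 2) * ENNReal.ofReal (α ^ (-(t / 2))) * anorm2 a (xplus - x)) +
          2 * (K ^ t * ENNReal.ofReal (α ^ (1 - t) / (1 - t))) := by
        gcongr
        · exact (tsum_large_le_kSum_rpow_half_mul_anorm2 ha (fun j => (hr j).le) α xplus _).trans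
            (mul_le_mul_left (kSum_rpow_half_le a r ht.1 xplus hα) _)
        · exact (tsum_small_le_lintegral_kSum ha hr α xplus).trans
            (lintegral_kSum_le a r ht xplus hα.le)
    _ = 2 * K ^ (t / 2) * ENNReal.ofReal (α ^ (-(t / 2))) * anorm2 a (xplus - x) +
          K ^ t * (2 * ENNReal.ofReal (α ^ (1 - t) / (1 - t))) := by ring
    _ ≤ 2 * K ^ (t / 2) * ENNReal.ofReal (α ^ (-(t / 2))) * anorm2 a (xplus - x) +
          K ^ t * (ENNReal.ofReal (4 * (2 ^ (1 - t) - 1)⁻¹) * ENNReal.ofReal (α ^ (1 - t))) := by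
        gcongr
    _ = _ := by ring

theorem stmt6 (a r : Λ → ℝ) (ha : ∀ j, 0 < a j) (hr : ∀ j, 0 < r j)
    (t : ℝ) (ht : t ∈ Set.Ioo (0:ℝ) 1)
    (xplus : Λ → ℝ) (hx1 : Summable fun j => r j * |xplus j|)
    (hk : knorm a r t xplus ≠ ⊤)
    (x : Λ → ℝ) (hx : Summable fun j => r j * |x j|) (α : ℝ) (hα : 0 < α) :
    ENNReal.ofReal ((∑' j, r j * |xplus j - x j|) + (∑' j, r j * |xplus j|)
        - ∑' j, r j * |x j|) ≤
      2 * knorm a r t xplus ^ (t / 2) * ENNReal.ofReal (α ^ (-(t / 2))) *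
          anorm2 a (xplus - x)
        + ENNReal.ofReal (4 * (2 ^ (1 - t) - 1)⁻¹) * knorm a r t xplus ^ t *
          ENNReal.ofReal (α ^ (1 - t)) :=
  stmt6_general a r ha hr t ht xplus hx1 x hx α hα
end
end

section
/- Let $t\in(0,1)$ and $x^+\in\ell^1_{\bar r}$. If $\|x^+\|_{k_t}<\infty$ then the variational source condition $\|x^+-x\|_{\bar r,1}+\|x^+\|_{\bar r,1}-\|x\|_{\bar r,1} \le K\|x^+-x\|_{\bar a,2}^{(2-2t)/(2-t)}$ holds for all $x\in\ell^1_{\bar r}$ with constant $K=(2+4(2^{1-t}-1)^{-1})\|x^+\|_{k_t}^{t/(2-t)}$. -/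
open scoped ENNReal
noncomputable section

variable {Λ : Type*}

/-! Fix a threshold `α > 0` and split the indices according to whether `|x⁺_j| > r_j α / a_j²`.
Pointwise, `r_j (|x⁺_j - x_j| + |x⁺_j| - |x_j|)` is at most `2 r_j |x⁺_j - x_j|` on the large
entries and at most `2 r_j |x⁺_j|` on the small ones. With `κ = ‖x⁺‖_{k_t}`, the weak-type bound
`kSum α x⁺ ≤ (κ / α) ^ t` and Cauchy–Schwarz bound the first part by
`(κ / α) ^ (t / 2) ‖x⁺ - x‖_{a,2}`; sorting the small entries into the dyadic shells
`r_j α 2^{-k-1} / a_j² < |x⁺_j| ≤ r_j α 2^{-k} / a_j²` bounds the second part by the geometric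
series `∑ α 2^{-k} (κ 2^{k+1} / α) ^ t = 2 (2 ^ (1 - t) - 1)⁻¹ α ^ (1 - t) κ ^ t`. Choosing `α`
to balance the two terms gives the claim. -/

theorem ENNReal.tsum_mul_le_Lp_mul_Lq {p q : ℝ} (hpq : p.HolderConjugate q) (f g : Λ → ℝ≥0∞) :
    ∑' j, f j * g j ≤ (∑' j, f j ^ p) ^ (1 / p) * (∑' j, g j ^ q) ^ (1 / q) := by
  let _ : MeasurableSpace Λ := ⊤
  simp only [← MeasureTheory.lintegral_count]
  exact ENNReal.lintegral_mul_le_Lp_mul_Lq _ hpq Measurable.of_discrete.aemeasurable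
    Measurable.of_discrete.aemeasurable

theorem ENNReal.ofReal_tsum_add_tsum_sub_tsum {f g h : Λ → ℝ} (hf : Summable f)
    (hg : Summable g) (hh : Summable h) (hnn : ∀ j, 0 ≤ f j + g j - h j) :
    ENNReal.ofReal (∑' j, f j + ∑' j, g j - ∑' j, h j) =
      ∑' j, ENNReal.ofReal (f j + g j - h j) := by
  rw [← hf.tsum_add hg, ← (hf.add hg).tsum_sub hh]
  exact ENNReal.ofReal_tsum_of_nonneg hnn ((hf.add hg).sub hh)

theorem summable_mul_abs_sub {r x y : Λ → ℝ} (hr : ∀ j, 0 ≤ r j)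
    (hx : Summable fun j => r j * |x j|) (hy : Summable fun j => r j * |y j|) :
    Summable fun j => r j * |x j - y j| :=
  Summable.of_nonneg_of_le (fun j => mul_nonneg (hr j) (abs_nonneg _))
    (fun j => by rw [← mul_add]; exact mul_le_mul_of_nonneg_left (abs_sub _ _) (hr j))
    (hx.add hy)

theorem mul_abs_sub_add_mul_abs_sub_mul_abs_nonneg {ρ : ℝ} (hρ : 0 ≤ ρ) (u v : ℝ) :
    0 ≤ ρ * |u - v| + ρ * |u| - ρ * |v| := by
  have : |v| ≤ |u - v| + |u| := by
    simpa [abs_sub_comm] using abs_sub_abs_le_abs_sub v u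
  nlinarith

theorem ofReal_mul_abs_sub_add_mul_abs_sub_mul_abs_le {ρ : ℝ} (hρ : 0 ≤ ρ) (u v : ℝ) (p : Prop)
    [Decidable p] :
    ENNReal.ofReal (ρ * |u - v| + ρ * |u| - ρ * |v|) ≤
      2 * ENNReal.ofReal (if p then ρ * |u - v| else 0) +
        2 * ENNReal.ofReal (if p then 0 else ρ * |u|) := by
  rw [← ENNReal.ofReal_ofNat 2]
  split_ifs
  · rw [ENNReal.ofReal_zero, mul_zero, add_zero, ← ENNReal.ofReal_mul zero_le_two]
    exact ENNReal.ofReal_le_ofReal (by nlinarith [abs_sub_abs_le_abs_sub u v])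
  · rw [ENNReal.ofReal_zero, mul_zero, zero_add, ← ENNReal.ofReal_mul zero_le_two]
    exact ENNReal.ofReal_le_ofReal (by nlinarith [abs_sub u v])

theorem ofReal_mul_abs_le_tsum_dyadic {α ρ A u : ℝ} (hα : 0 < α) (hρ : 0 ≤ ρ)
    (hu : |u| ≤ ρ * α / A ^ 2) :
    ENNReal.ofReal (ρ * |u|) ≤ ∑' k : ℕ, ENNReal.ofReal (α / 2 ^ k) *
      ENNReal.ofReal (if ρ * (α / 2 ^ (k + 1)) / A ^ 2 < |u| then ρ ^ 2 / A ^ 2 else 0) := by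
  rcases (abs_nonneg u).eq_or_lt with h0 | hpos
  · simp [← h0]
  set β := ρ * α / A ^ 2
  -- `k` indexes the dyadic shell `β / 2 ^ (k + 1) < |u| ≤ β / 2 ^ k` containing `|u|`.
  obtain ⟨k, hk, hk'⟩ := exists_nat_pow_near ((one_le_div hpos).mpr hu) one_lt_two
  refine le_trans ?_ (ENNReal.le_tsum k)
  rw [if_pos, ← ENNReal.ofReal_mul (by positivity)]
  · apply ENNReal.ofReal_le_ofReal
    have : |u| ≤ β / 2 ^ k := by rw [le_div_iff₀ (by positivity)]; rwa [le_div_iff₀ hpos, mul_comm] at hk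
    calc ρ * |u| ≤ ρ * (β / 2 ^ k) := mul_le_mul_of_nonneg_left this hρ
      _ = α / 2 ^ k * (ρ ^ 2 / A ^ 2) := by ring
  · calc ρ * (α / 2 ^ (k + 1)) / A ^ 2 = β / 2 ^ (k + 1) := by ring
      _ < |u| := by rw [div_lt_iff₀ (by positivity)]; rwa [div_lt_iff₀ hpos, mul_comm] at hk'

section

variable {a r : Λ → ℝ}

theorem kSum_le_of_knorm_le {t α κ : ℝ} {x : Λ → ℝ} (ht : 0 < t) (hα : 0 < α) (hκ0 : 0 ≤ κ)
    (hκ : knorm a r t x ≤ ENNReal.ofReal κ) :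
    kSum a r α x ≤ ENNReal.ofReal ((κ / α) ^ t) := by
  have hα' : ENNReal.ofReal α ≠ 0 := (ENNReal.ofReal_pos.mpr hα).ne'
  have hroot : kSum a r α x ^ (1 / t) ≤ ENNReal.ofReal (κ / α) := by
    rw [ENNReal.ofReal_div_of_pos hα, ENNReal.le_div_iff_mul_le (Or.inl hα')
      (Or.inl ENNReal.ofReal_ne_top), mul_comm]
    exact (le_biSup (fun β => ENNReal.ofReal β * kSum a r β x ^ (1 / t))
      (Set.mem_Ioi.mpr hα)).trans hκ
  calc kSum a r α x = (kSum a r α x ^ (1 / t)) ^ t := by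
        rw [← ENNReal.rpow_mul, one_div_mul_cancel ht.ne', ENNReal.rpow_one]
    _ ≤ ENNReal.ofReal (κ / α) ^ t := ENNReal.rpow_le_rpow hroot ht.le
    _ = ENNReal.ofReal ((κ / α) ^ t) := ENNReal.ofReal_rpow_of_nonneg (by positivity) ht.le

theorem eq_zero_of_anorm2_eq_zero (ha : ∀ j, a j ≠ 0) {y : Λ → ℝ} (h : anorm2 a y = 0) :
    y = 0 := by
  obtain ⟨h, -⟩ | ⟨-, h⟩ := ENNReal.rpow_eq_zero_iff.mp h
  · funext j
    have hj := ENNReal.ofReal_eq_zero.mp (ENNReal.tsum_eq_zero.mp h j)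
    have : a j ^ 2 * y j ^ 2 = 0 := le_antisymm hj (by positivity)
    simpa [ha j] using this
  · norm_num at h

theorem tsum_ite_mul_abs_le_kSum_mul_anorm2 (ha : ∀ j, a j ≠ 0) (hr : ∀ j, 0 ≤ r j) (α : ℝ)
    (x y : Λ → ℝ) :
    ∑' j, ENNReal.ofReal (if r j * α / a j ^ 2 < |x j| then r j * |y j| else 0) ≤
      kSum a r α x ^ (1 / 2 : ℝ) * anorm2 a y := by
  set c : Λ → ℝ := fun j => if r j * α / a j ^ 2 < |x j| then r j ^ 2 / a j ^ 2 else 0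
  have hc : ∀ j, 0 ≤ c j := fun j => by simp only [c]; split_ifs <;> positivity
  have hpt : ∀ j, ENNReal.ofReal (if r j * α / a j ^ 2 < |x j| then r j * |y j| else 0) =
      ENNReal.ofReal (c j) ^ (1 / 2 : ℝ) * ENNReal.ofReal (a j ^ 2 * y j ^ 2) ^ (1 / 2 : ℝ) := by
    intro j
    rw [← ENNReal.mul_rpow_of_nonneg _ _ (by norm_num), ← ENNReal.ofReal_mul (hc j),
      ENNReal.ofReal_rpow_of_nonneg (mul_nonneg (hc j) (by positivity)) (by norm_num),
      ← Real.sqrt_eq_rpow]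
    congr 1
    simp only [c]
    split_ifs
    · rw [show r j ^ 2 / a j ^ 2 * (a j ^ 2 * y j ^ 2) = (r j * |y j|) ^ 2 by
        field_simp [ha j]; rw [sq_abs]]
      exact (Real.sqrt_sq (mul_nonneg (hr j) (abs_nonneg _))).symm
    · simp
  have hsq : ∀ z : ℝ≥0∞, (z ^ (1 / 2 : ℝ)) ^ (2 : ℝ) = z := fun z => by
    rw [← ENNReal.rpow_mul]; norm_num
  calc _ = ∑' j, ENNReal.ofReal (c j) ^ (1 / 2 : ℝ) *
        ENNReal.ofReal (a j ^ 2 * y j ^ 2) ^ (1 / 2 : ℝ) := tsum_congr hpt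
    _ ≤ _ := by
      have := ENNReal.tsum_mul_le_Lp_mul_Lq Real.HolderConjugate.two_two
        (fun j => ENNReal.ofReal (c j) ^ (1 / 2 : ℝ))
        (fun j => ENNReal.ofReal (a j ^ 2 * y j ^ 2) ^ (1 / 2 : ℝ))
      simp only [hsq] at this
      exact this

theorem tsum_ite_mul_abs_le_tsum_dyadic_kSum (hr : ∀ j, 0 ≤ r j) {α : ℝ} (hα : 0 < α)
    (x : Λ → ℝ) :
    ∑' j, ENNReal.ofReal (if r j * α / a j ^ 2 < |x j| then 0 else r j * |x j|) ≤
      ∑' k : ℕ, ENNReal.ofReal (α / 2 ^ k) * kSum a r (α / 2 ^ (k + 1)) x := by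
  calc _ ≤ ∑' j, ∑' k : ℕ, ENNReal.ofReal (α / 2 ^ k) * ENNReal.ofReal
          (if r j * (α / 2 ^ (k + 1)) / a j ^ 2 < |x j| then r j ^ 2 / a j ^ 2 else 0) := by
        refine ENNReal.tsum_le_tsum fun j => ?_
        by_cases h : r j * α / a j ^ 2 < |x j|
        · simp [h]
        · rw [if_neg h]
          exact ofReal_mul_abs_le_tsum_dyadic hα (hr j) (not_lt.mp h)
    _ = _ := by
        rw [ENNReal.tsum_comm]
        simp only [ENNReal.tsum_mul_left, kSum]

theorem tsum_dyadic_kSum_le {t α κ : ℝ} {x : Λ → ℝ} (ht : t ∈ Set.Ioo (0 : ℝ) 1) (hα : 0 < α)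
    (hκ0 : 0 ≤ κ) (hκ : knorm a r t x ≤ ENNReal.ofReal κ) :
    ∑' k : ℕ, ENNReal.ofReal (α / 2 ^ k) * kSum a r (α / 2 ^ (k + 1)) x ≤
      ENNReal.ofReal (2 * (2 ^ (1 - t) - 1)⁻¹ * (α ^ (1 - t) * κ ^ t)) := by
  obtain ⟨ht0, ht1⟩ := ht
  have h2t : (2 : ℝ) ^ t < 2 := by
    simpa using Real.rpow_lt_rpow_of_exponent_lt one_lt_two ht1
  have hterm : ∀ k : ℕ, α / 2 ^ k * (κ / (α / 2 ^ (k + 1))) ^ t =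
      2 ^ t * α ^ (1 - t) * κ ^ t * (2 ^ t / 2) ^ k := by
    intro k
    rw [Real.div_rpow hκ0 (by positivity), Real.div_rpow hα.le (by positivity),
      ← Real.rpow_pow_comm (by norm_num), Real.rpow_sub hα, Real.rpow_one, div_pow]
    field_simp
    ring
  calc _ ≤ ∑' k : ℕ, ENNReal.ofReal (α / 2 ^ k) *
          ENNReal.ofReal ((κ / (α / 2 ^ (k + 1))) ^ t) :=
        ENNReal.tsum_le_tsum fun k => by
          gcongr
          exact kSum_le_of_knorm_le ht0 (by positivity) hκ0 hκ
    _ = ∑' k : ℕ, ENNReal.ofReal (2 ^ t * α ^ (1 - t) * κ ^ t) *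
          ENNReal.ofReal (2 ^ t / 2) ^ k := by
        congr 1
        ext k
        rw [← ENNReal.ofReal_pow (by positivity), ← ENNReal.ofReal_mul (by positivity),
          ← ENNReal.ofReal_mul (by positivity), hterm]
    _ = ENNReal.ofReal (2 ^ t * α ^ (1 - t) * κ ^ t * (1 - 2 ^ t / 2)⁻¹) := by
        rw [ENNReal.tsum_mul_left, ENNReal.tsum_geometric, ← ENNReal.ofReal_one,
          ← ENNReal.ofReal_sub _ (by positivity), ← ENNReal.ofReal_inv_of_pos (by linarith),
          ← ENNReal.ofReal_mul (by positivity)]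
    _ = _ := by
        congr 1
        rw [Real.rpow_sub two_pos, Real.rpow_one]
        field_simp

theorem tsum_ofReal_vsc_le (ha : ∀ j, a j ≠ 0) (hr : ∀ j, 0 ≤ r j) {t κ α : ℝ}
    (ht : t ∈ Set.Ioo (0 : ℝ) 1) (hκ0 : 0 ≤ κ) {xplus : Λ → ℝ}
    (hκ : knorm a r t xplus ≤ ENNReal.ofReal κ) (hα : 0 < α) (x : Λ → ℝ) :
    ∑' j, ENNReal.ofReal (r j * |xplus j - x j| + r j * |xplus j| - r j * |x j|) ≤
      2 * (ENNReal.ofReal ((κ / α) ^ (t / 2)) * anorm2 a (xplus - x)) +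
        2 * ENNReal.ofReal (2 * (2 ^ (1 - t) - 1)⁻¹ * (α ^ (1 - t) * κ ^ t)) := by
  calc _ ≤ ∑' j, (2 * ENNReal.ofReal
          (if r j * α / a j ^ 2 < |xplus j| then r j * |xplus j - x j| else 0) +
        2 * ENNReal.ofReal (if r j * α / a j ^ 2 < |xplus j| then 0 else r j * |xplus j|)) :=
        ENNReal.tsum_le_tsum fun j => ofReal_mul_abs_sub_add_mul_abs_sub_mul_abs_le (hr j) _ _ _
    _ = 2 * ∑' j, ENNReal.ofReal
          (if r j * α / a j ^ 2 < |xplus j| then r j * |xplus j - x j| else 0) +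
        2 * ∑' j, ENNReal.ofReal
          (if r j * α / a j ^ 2 < |xplus j| then 0 else r j * |xplus j|) := by
        rw [ENNReal.tsum_add, ENNReal.tsum_mul_left, ENNReal.tsum_mul_left]
    _ ≤ _ := by
        gcongr
        · calc _ ≤ kSum a r α xplus ^ (1 / 2 : ℝ) * anorm2 a (xplus - x) :=
                tsum_ite_mul_abs_le_kSum_mul_anorm2 ha hr α xplus (xplus - x)
            _ ≤ ENNReal.ofReal ((κ / α) ^ t) ^ (1 / 2 : ℝ) * anorm2 a (xplus - x) := by
                gcongr
                exact kSum_le_of_knorm_le ht.1 hα hκ0 hκ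
            _ = _ := by
                rw [ENNReal.ofReal_rpow_of_nonneg (by positivity) (by norm_num),
                  ← Real.rpow_mul (by positivity), mul_one_div]
        · exact (tsum_ite_mul_abs_le_tsum_dyadic_kSum hr hα xplus).trans
            (tsum_dyadic_kSum_le ht hα hκ0 hκ)

end

theorem exists_rpow_balance {κ δ t : ℝ} (hκ : 0 < κ) (hδ : 0 < δ) (ht : t < 2) :
    ∃ α > 0, (κ / α) ^ (t / 2) * δ = κ ^ (t / (2 - t)) * δ ^ ((2 - 2 * t) / (2 - t)) ∧
      α ^ (1 - t) * κ ^ t = κ ^ (t / (2 - t)) * δ ^ ((2 - 2 * t) / (2 - t)) := by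
  obtain ⟨L, rfl⟩ : ∃ L, κ = Real.exp L := ⟨_, (Real.exp_log hκ).symm⟩
  obtain ⟨M, rfl⟩ : ∃ M, δ = Real.exp M := ⟨_, (Real.exp_log hδ).symm⟩
  have h2t : 2 - t ≠ 0 := by linarith
  -- `α = (δ ^ 2 / κ ^ t) ^ (1 / (2 - t))` makes the two terms equal.
  refine ⟨Real.exp ((2 * M - t * L) / (2 - t)), Real.exp_pos _, ?_, ?_⟩ <;>
    simp only [← Real.exp_sub, ← Real.exp_mul, ← Real.exp_add] <;> congr 1 <;>
    field_simp <;> ring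

theorem le_of_forall_threshold_bound {L D : ℝ≥0∞} {κ t c : ℝ} (hκ : 0 < κ) (ht : t < 1)
    (hc : 0 ≤ c) (hD : 0 < D)
    (h : ∀ α > 0, L ≤ 2 * (ENNReal.ofReal ((κ / α) ^ (t / 2)) * D) +
      2 * ENNReal.ofReal (2 * c * (α ^ (1 - t) * κ ^ t))) :
    L ≤ ENNReal.ofReal ((2 + 4 * c) * κ ^ (t / (2 - t))) * D ^ ((2 - 2 * t) / (2 - t)) := by
  rcases eq_top_or_lt_top D with rfl | hDlt
  · rw [ENNReal.top_rpow_of_pos (div_pos (by linarith) (by linarith)),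
      ENNReal.mul_top (ENNReal.ofReal_pos.mpr (by positivity)).ne']
    exact le_top
  have hδ := ENNReal.toReal_pos hD.ne' hDlt.ne
  obtain ⟨α, hα, hbal₁, hbal₂⟩ := exists_rpow_balance hκ hδ (t := t) (by linarith)
  calc L ≤ _ := h α hα
    _ = _ := by
      rw [← ENNReal.ofReal_toReal hDlt.ne, ENNReal.ofReal_rpow_of_pos hδ,
        ← ENNReal.ofReal_mul (by positivity), ← ENNReal.ofReal_ofNat 2,
        ← ENNReal.ofReal_mul (by positivity), ← ENNReal.ofReal_mul (by positivity),
        ← ENNReal.ofReal_add (by positivity) (by positivity),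
        ← ENNReal.ofReal_mul (by positivity), hbal₁, hbal₂]
      ring_nf

theorem stmt7 (a r : Λ → ℝ) (ha : ∀ j, 0 < a j) (hr : ∀ j, 0 < r j)
    (t : ℝ) (ht : t ∈ Set.Ioo (0:ℝ) 1)
    (xplus : Λ → ℝ) (hx1 : Summable fun j => r j * |xplus j|)
    (hk : knorm a r t xplus ≠ ⊤) :
    ∀ x : Λ → ℝ, Summable (fun j => r j * |x j|) →
      ENNReal.ofReal ((∑' j, r j * |xplus j - x j|) + (∑' j, r j * |xplus j|)
          - ∑' j, r j * |x j|) ≤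
        ENNReal.ofReal ((2 + 4 * (2 ^ (1 - t) - 1)⁻¹) *
            (knorm a r t xplus).toReal ^ (t / (2 - t))) *
          anorm2 a (xplus - x) ^ ((2 - 2 * t) / (2 - t)) := by
  intro x hx
  have hκ0 : 0 ≤ (knorm a r t xplus).toReal := ENNReal.toReal_nonneg
  have hkκ := (ENNReal.ofReal_toReal hk).ge
  generalize (knorm a r t xplus).toReal = κ at hκ0 hkκ ⊢
  have ha' : ∀ j, a j ≠ 0 := fun j => (ha j).ne'
  have hr' : ∀ j, 0 ≤ r j := fun j => (hr j).le
  have hbound := fun α (hα : 0 < α) => tsum_ofReal_vsc_le ha' hr' ht hκ0 hkκ hα x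
  rw [ENNReal.ofReal_tsum_add_tsum_sub_tsum (summable_mul_abs_sub hr' hx1 hx) hx1 hx
    fun j => mul_abs_sub_add_mul_abs_sub_mul_abs_nonneg (hr' j) _ _]
  rcases hκ0.eq_or_lt with rfl | hκ
  · refine (hbound 1 one_pos).trans (le_of_eq ?_ |>.trans zero_le)
    simp [Real.zero_rpow (by linarith [ht.1] : t / 2 ≠ 0), Real.zero_rpow ht.1.ne']
  rcases eq_zero_or_pos (anorm2 a (xplus - x)) with hD0 | hD
  · simp [sub_eq_zero.mp (eq_zero_of_anorm2_eq_zero ha' hD0)]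
  have hc : 0 ≤ ((2 : ℝ) ^ (1 - t) - 1)⁻¹ :=
    inv_nonneg.mpr (sub_nonneg.mpr (Real.one_le_rpow one_le_two (sub_pos.mpr ht.2).le))
  exact le_of_forall_threshold_bound hκ ht.2 hc hD hbound
end
end

section
/- Let $t\in(0,1)$ and $x^+\in\ell^1_{\bar r}$. Suppose there is $K>0$ such that $\|x^+\|_{\bar r,1}-\|x\|_{\bar r,1} \le K\|x^+-x\|_{\bar a,2}^{(2-2t)/(2-t)}$ for all sequences $x$ with $|x_j|\le|x^+_j|$ for all $j$. Then $\|x^+\|_{k_t}\le K^{(2-t)/t}$. -/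
open scoped ENNReal
noncomputable section

variable {Λ : Type*}

/-!
Fix `β > 0` and let `S = {j : r_j β / a_j² < |x⁺_j|}`. Shrinking `x⁺_j` towards `0` by
`δ_j = r_j β / a_j²` for `j ∈ S` (and leaving the other coordinates alone) gives an admissible `x`
for which, with `W = ∑_{j ∈ S} r_j² / a_j²` the sum in `‖·‖_{k_t}`, both sides of the hypothesis
are explicit: `‖x⁺‖_{r,1} - ‖x‖_{r,1} = β W` and `‖x⁺ - x‖_{a,2}² = β² W`. The hypothesis then
reads `β W ≤ K (β² W)^{(1-t)/(2-t)}`, i.e. `W ≤ K^{2-t} β^{-t}`, and taking the supremum over `β`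
of `β W^{1/t}` gives the claim.
-/

lemma abs_sub_sign_mul_of_le {y d : ℝ} (hd : 0 ≤ d) (hdy : d ≤ |y|) :
    |y - Real.sign y * d| = |y| - d := by
  rcases lt_trichotomy y 0 with hy | rfl | hy
  · rw [abs_of_neg hy] at hdy
    rw [Real.sign_of_neg hy, abs_of_neg hy, abs_of_nonpos (by linarith)]
    ring
  · rw [abs_zero] at hdy
    rw [Real.sign_zero, le_antisymm hdy hd]
    simp
  · rw [abs_of_pos hy] at hdy
    rw [Real.sign_of_pos hy, abs_of_pos hy, abs_of_nonneg (by linarith)]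
    ring

lemma abs_sign_mul_of_le {y d : ℝ} (hd : 0 ≤ d) (hdy : d ≤ |y|) : |Real.sign y * d| = d := by
  rcases eq_or_ne y 0 with rfl | hy
  · rw [abs_zero] at hdy
    simp [le_antisymm hdy hd]
  · rcases Real.sign_apply_eq_of_ne_zero y hy with h | h <;> simp [h, abs_of_nonneg hd]

lemma le_of_mul_le_mul_rpow {β W K t : ℝ} (hβ : 0 < β) (hW : 0 < W) (ht : t < 2)
    (h : β * W ≤ K * (β ^ 2 * W) ^ ((1 - t) / (2 - t))) : W ≤ K ^ (2 - t) * β ^ (-t) := by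
  have h2t : 0 < 2 - t := by linarith
  have hβW : 0 < β * W := mul_pos hβ hW
  have hK : 0 < K := by
    by_contra! hK
    nlinarith [mul_nonpos_of_nonpos_of_nonneg hK (Real.rpow_nonneg (by positivity : 0 ≤ β ^ 2 * W)
      ((1 - t) / (2 - t)))]
  have hpow : (β * W) ^ (2 - t) ≤ K ^ (2 - t) * (β ^ 2 * W) ^ (1 - t) := by
    calc (β * W) ^ (2 - t) ≤ (K * (β ^ 2 * W) ^ ((1 - t) / (2 - t))) ^ (2 - t) :=
          Real.rpow_le_rpow hβW.le h h2t.le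
      _ = K ^ (2 - t) * (β ^ 2 * W) ^ (1 - t) := by
          rw [Real.mul_rpow hK.le (by positivity), ← Real.rpow_mul (by positivity),
            div_mul_cancel₀ _ h2t.ne']
  have hsplit : (β ^ 2 * W) ^ (1 - t) = (β * W) ^ (1 - t) * β ^ (1 - t) := by
    rw [← Real.mul_rpow hβW.le hβ.le]
    ring_nf
  have hcancel : β * W ≤ K ^ (2 - t) * β ^ (1 - t) := by
    have hpos : 0 < (β * W) ^ (1 - t) := Real.rpow_pos_of_pos hβW _
    have hexp : (β * W) ^ (2 - t) = β * W * (β * W) ^ (1 - t) := by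
      rw [show (2 : ℝ) - t = 1 + (1 - t) by ring, Real.rpow_add hβW, Real.rpow_one]
    rw [hexp, hsplit] at hpow
    nlinarith
  rw [show -t = (1 - t) - 1 by ring, Real.rpow_sub_one hβ.ne', ← mul_div_assoc, le_div_iff₀ hβ]
  linarith

section Shrink

def shrink (y δ : Λ → ℝ) : Λ → ℝ := fun j => y j - Real.sign (y j) * δ j

variable {y δ : Λ → ℝ} (hδ0 : ∀ j, 0 ≤ δ j) (hδ : ∀ j, δ j ≤ |y j|)
include hδ0 hδ

lemma abs_shrink (j : Λ) : |shrink y δ j| = |y j| - δ j :=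
  abs_sub_sign_mul_of_le (hδ0 j) (hδ j)

lemma abs_shrink_le (j : Λ) : |shrink y δ j| ≤ |y j| := by
  rw [abs_shrink hδ0 hδ]
  linarith [hδ0 j]

lemma tsum_sub_tsum_shrink {r : Λ → ℝ} (hr : ∀ j, 0 ≤ r j) (hy : Summable fun j => r j * |y j|) :
    (∑' j, r j * |y j|) - ∑' j, r j * |shrink y δ j| = ∑' j, r j * δ j := by
  have hshrink : Summable fun j => r j * |shrink y δ j| :=
    hy.of_nonneg_of_le (fun j => mul_nonneg (hr j) (abs_nonneg _))
      fun j => mul_le_mul_of_nonneg_left (abs_shrink_le hδ0 hδ j) (hr j)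
  rw [← hy.tsum_sub hshrink]
  exact tsum_congr fun j => by rw [abs_shrink hδ0 hδ]; ring

lemma anorm2_sub_shrink (a : Λ → ℝ) :
    anorm2 a (y - shrink y δ) = (∑' j, ENNReal.ofReal (a j ^ 2 * δ j ^ 2)) ^ ((1 : ℝ) / 2) := by
  unfold anorm2
  congr 2
  funext j
  have hsub : (y - shrink y δ) j = Real.sign (y j) * δ j := by simp [shrink]
  rw [hsub, ← sq_abs (_ * δ j), abs_sign_mul_of_le (hδ0 j) (hδ j)]

end Shrink

section Threshold

variable {a r : Λ → ℝ} {β : ℝ} {y : Λ → ℝ}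

def kShrinkAmount (a r : Λ → ℝ) (β : ℝ) (y : Λ → ℝ) (j : Λ) : ℝ :=
  if r j * β / a j ^ 2 < |y j| then r j * β / a j ^ 2 else 0

def kTerm (a r : Λ → ℝ) (β : ℝ) (y : Λ → ℝ) (j : Λ) : ℝ :=
  if r j * β / a j ^ 2 < |y j| then r j ^ 2 / a j ^ 2 else 0

lemma kSum_eq_tsum_kTerm : kSum a r β y = ∑' j, ENNReal.ofReal (kTerm a r β y j) := rfl

lemma kTerm_nonneg (j : Λ) : 0 ≤ kTerm a r β y j := by
  unfold kTerm
  split_ifs <;> positivity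

lemma kShrinkAmount_nonneg {j : Λ} (hr : 0 ≤ r j) (hβ : 0 ≤ β) : 0 ≤ kShrinkAmount a r β y j := by
  unfold kShrinkAmount
  split_ifs <;> positivity

lemma kShrinkAmount_le_abs (j : Λ) : kShrinkAmount a r β y j ≤ |y j| := by
  unfold kShrinkAmount
  split_ifs with h
  exacts [h.le, abs_nonneg _]

lemma mul_kShrinkAmount (j : Λ) : r j * kShrinkAmount a r β y j = β * kTerm a r β y j := by
  unfold kShrinkAmount kTerm
  split_ifs <;> ring

lemma sq_mul_kShrinkAmount_sq (j : Λ) :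
    a j ^ 2 * kShrinkAmount a r β y j ^ 2 = β ^ 2 * kTerm a r β y j := by
  unfold kShrinkAmount kTerm
  split_ifs
  · rcases eq_or_ne (a j) 0 with ha | ha
    · simp [ha]
    · field_simp
  · ring

end Threshold

theorem kSum_le_of_variationalSourceCondition {a r y : Λ → ℝ} {t K β : ℝ} (hr : ∀ j, 0 ≤ r j)
    (ht : t < 2) (hy : Summable fun j => r j * |y j|)
    (hvsc : ∀ x : Λ → ℝ, (∀ j, |x j| ≤ |y j|) →
      ENNReal.ofReal ((∑' j, r j * |y j|) - ∑' j, r j * |x j|) ≤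
        ENNReal.ofReal K * anorm2 a (y - x) ^ ((2 - 2 * t) / (2 - t)))
    (hβ : 0 < β) :
    kSum a r β y ≤ ENNReal.ofReal (K ^ (2 - t) * β ^ (-t)) := by
  set δ := kShrinkAmount a r β y
  have hδ0 : ∀ j, 0 ≤ δ j := fun j => kShrinkAmount_nonneg (hr j) hβ.le
  have hδ : ∀ j, δ j ≤ |y j| := kShrinkAmount_le_abs
  have hsum : Summable (kTerm a r β y) := by
    refine (hy.div_const β).of_nonneg_of_le kTerm_nonneg fun j => ?_
    rw [le_div_iff₀ hβ, mul_comm, ← mul_kShrinkAmount]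
    exact mul_le_mul_of_nonneg_left (hδ j) (hr j)
  set W := ∑' j, kTerm a r β y j
  rw [kSum_eq_tsum_kTerm, ← ENNReal.ofReal_tsum_of_nonneg kTerm_nonneg hsum]
  rcases (tsum_nonneg kTerm_nonneg : 0 ≤ W).eq_or_lt with hW0 | hW
  · rw [← hW0, ENNReal.ofReal_zero]
    exact zero_le
  refine ENNReal.ofReal_le_ofReal (le_of_mul_le_mul_rpow hβ hW ht ?_)
  have h := hvsc (shrink y δ) (abs_shrink_le hδ0 hδ)
  rw [tsum_sub_tsum_shrink hδ0 hδ hr hy, anorm2_sub_shrink hδ0 hδ] at h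
  have hexp : (1 : ℝ) / 2 * ((2 - 2 * t) / (2 - t)) = (1 - t) / (2 - t) := by ring
  simp only [δ, mul_kShrinkAmount, sq_mul_kShrinkAmount_sq, tsum_mul_left] at h
  rw [← ENNReal.ofReal_tsum_of_nonneg (fun j => mul_nonneg (sq_nonneg β) (kTerm_nonneg j))
      (hsum.mul_left _),
    tsum_mul_left, ← ENNReal.rpow_mul, hexp, ENNReal.ofReal_rpow_of_pos (by positivity),
    ← ENNReal.ofReal_mul' (by positivity), ENNReal.ofReal_le_ofReal_iff'] at h
  exact h.resolve_right (not_le.2 (by positivity))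

lemma knorm_le_of_kSum_le {a r y : Λ → ℝ} {t C : ℝ} (ht : 0 < t) (hC : 0 ≤ C)
    (h : ∀ β > 0, kSum a r β y ≤ ENNReal.ofReal (C * β ^ (-t))) :
    knorm a r t y ≤ ENNReal.ofReal (C ^ (1 / t)) := by
  refine iSup₂_le fun β (hβ : 0 < β) => ?_
  have hβ_rpow : β * (C * β ^ (-t)) ^ (1 / t) = C ^ (1 / t) := by
    rw [Real.mul_rpow hC (by positivity), ← Real.rpow_mul hβ.le,
      show -t * (1 / t) = -1 by field_simp, Real.rpow_neg_one]
    field_simp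
  calc ENNReal.ofReal β * kSum a r β y ^ (1 / t)
      ≤ ENNReal.ofReal β * ENNReal.ofReal (C * β ^ (-t)) ^ (1 / t) := by
        gcongr
        exact h β hβ
    _ = ENNReal.ofReal (C ^ (1 / t)) := by
        rw [ENNReal.ofReal_rpow_of_nonneg (by positivity) (by positivity),
          ← ENNReal.ofReal_mul hβ.le, hβ_rpow]

theorem stmt8_general (a r : Λ → ℝ) (hr : ∀ j, 0 < r j)
    (t : ℝ) (ht : t ∈ Set.Ioo (0:ℝ) 1)
    (xplus : Λ → ℝ) (hx1 : Summable fun j => r j * |xplus j|)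
    (K : ℝ) (hK : 0 < K)
    (hvsc : ∀ x : Λ → ℝ, (∀ j, |x j| ≤ |xplus j|) →
      ENNReal.ofReal ((∑' j, r j * |xplus j|) - ∑' j, r j * |x j|) ≤
        ENNReal.ofReal K * anorm2 a (xplus - x) ^ ((2 - 2 * t) / (2 - t))) :
    knorm a r t xplus ≤ ENNReal.ofReal (K ^ ((2 - t) / t)) := by
  have hkSum : ∀ β > 0, kSum a r β xplus ≤ ENNReal.ofReal (K ^ (2 - t) * β ^ (-t)) :=
    fun β hβ => kSum_le_of_variationalSourceCondition (fun j => (hr j).le) (by linarith [ht.2])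
      hx1 hvsc hβ
  calc knorm a r t xplus ≤ ENNReal.ofReal ((K ^ (2 - t)) ^ (1 / t)) :=
        knorm_le_of_kSum_le ht.1 (by positivity) hkSum
    _ = ENNReal.ofReal (K ^ ((2 - t) / t)) := by rw [← Real.rpow_mul hK.le, mul_one_div]

theorem stmt8 (a r : Λ → ℝ) (ha : ∀ j, 0 < a j) (hr : ∀ j, 0 < r j)
    (t : ℝ) (ht : t ∈ Set.Ioo (0:ℝ) 1)
    (xplus : Λ → ℝ) (hx1 : Summable fun j => r j * |xplus j|)
    (K : ℝ) (hK : 0 < K)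
    (hvsc : ∀ x : Λ → ℝ, (∀ j, |x j| ≤ |xplus j|) →
      ENNReal.ofReal ((∑' j, r j * |xplus j|) - ∑' j, r j * |x j|) ≤
        ENNReal.ofReal K * anorm2 a (xplus - x) ^ ((2 - 2 * t) / (2 - t))) :
    knorm a r t xplus ≤ ENNReal.ofReal (K ^ ((2 - t) / t)) :=
  stmt8_general a r hr t ht xplus hx1 K hK hvsc
end
end

section
/- Let $t\in(1,2)$ and $x\in\mathbb{R}^\Lambda$ with $\|x\|_{k_t}<\infty$. Then for all $\alpha>0$, $\|T_\alpha(x)\|_{\bar r,1} \le 2(1-2^{1-t})^{-1}\|x\|_{k_t}^{t}\,\alpha^{1-t}$. -/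
open scoped ENNReal
noncomputable section

variable {Λ : Type*}

lemma ksum_le (a r : Λ → ℝ) (t : ℝ) (ht : 1 < t) (x : Λ → ℝ) {β : ℝ} (hβ : 0 < β) :
    kSum a r β x ≤ (knorm a r t x / ENNReal.ofReal β) ^ t := by
  have ht0 : (0:ℝ) < t := lt_trans one_pos ht
  have h1 : ENNReal.ofReal β * (kSum a r β x) ^ (1 / t) ≤ knorm a r t x :=
    le_iSup₂ (f := fun (α : ℝ) (_ : α ∈ Set.Ioi (0:ℝ)) =>
      ENNReal.ofReal α * (kSum a r α x) ^ (1 / t)) β hβ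
  have h2 : (kSum a r β x) ^ (1 / t) ≤ knorm a r t x / ENNReal.ofReal β := by
    rw [ENNReal.le_div_iff_mul_le (Or.inl (by simp [hβ])) (Or.inl (by simp))]
    rw [mul_comm] at h1; exact h1
  calc kSum a r β x = ((kSum a r β x) ^ (1/t)) ^ t := by
        rw [← ENNReal.rpow_mul, one_div_mul_cancel ht0.ne', ENNReal.rpow_one]
    _ ≤ (knorm a r t x / ENNReal.ofReal β) ^ t :=
        ENNReal.rpow_le_rpow h2 ht0.le

lemma exists_dyadic {c y : ℝ} (hc : 0 < c) (h : c < y) :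
    ∃ n : ℕ, 2 ^ n * c < y ∧ y ≤ 2 ^ (n + 1) * c := by
  classical
  have hP : ∃ n : ℕ, y ≤ 2 ^ (n + 1) * c := by
    obtain ⟨n, hn⟩ := pow_unbounded_of_one_lt (y / c) (one_lt_two (α := ℝ))
    rw [div_lt_iff₀ hc] at hn
    exact ⟨n, by nlinarith [pow_pos (zero_lt_two (α := ℝ)) n, pow_succ (2:ℝ) n]⟩
  refine ⟨Nat.find hP, ?_, Nat.find_spec hP⟩
  rcases Nat.eq_zero_or_eq_succ_pred (Nat.find hP) with h0 | hs
  · rw [h0]; simpa using h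
  · have hlt := Nat.find_min hP (m := Nat.find hP - 1) (by omega)
    push_neg at hlt
    have he : Nat.find hP - 1 + 1 = Nat.find hP := by omega
    rw [he] at hlt; exact hlt

lemma real_key {α t : ℝ} (hα : 0 < α) (n : ℕ) :
    (2:ℝ) ^ (n+1) * α * (((2:ℝ) ^ n * α) ^ t)⁻¹ = 2 * α ^ (1-t) * ((2:ℝ) ^ (1-t)) ^ n := by
  have h2 : (0:ℝ) < 2 := two_pos
  have hb : (0:ℝ) < (2:ℝ) ^ n * α := by positivity
  rw [← div_eq_mul_inv, div_eq_iff (ne_of_gt (Real.rpow_pos_of_pos hb t))]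
  rw [Real.mul_rpow (by positivity) hα.le]
  rw [← Real.rpow_natCast ((2:ℝ) ^ (1-t)) n, ← Real.rpow_natCast (2:ℝ) n,
    ← Real.rpow_mul h2.le, ← Real.rpow_mul h2.le]
  have e1 : (2:ℝ) ^ ((1-t) * (n:ℝ)) * 2 ^ ((n:ℝ) * t) = 2 ^ (n:ℝ) := by
    rw [← Real.rpow_add h2]; ring_nf
  have e2 : α ^ (1-t) * α ^ t = α := by
    rw [← Real.rpow_add hα]; norm_num
  calc (2:ℝ) ^ (n+1) * α
      = 2 * 2 ^ (n:ℝ) * α := by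
        rw [pow_succ, Real.rpow_natCast]; ring
    _ = 2 * ((2:ℝ) ^ ((1-t) * (n:ℝ)) * 2 ^ ((n:ℝ) * t)) * (α ^ (1-t) * α ^ t) := by
        rw [e1, e2]
    _ = 2 * α ^ (1-t) * 2 ^ ((1-t) * (n:ℝ)) * (2 ^ ((n:ℝ) * t) * α ^ t) := by ring

theorem stmt9 (a r : Λ → ℝ) (ha : ∀ j, 0 < a j) (hr : ∀ j, 0 < r j)
    (t : ℝ) (ht : t ∈ Set.Ioo (1:ℝ) 2)
    (x : Λ → ℝ) (hk : knorm a r t x ≠ ⊤) :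
    ∀ α > (0:ℝ), rnorm1 r (Tthresh a r α x) ≤
      ENNReal.ofReal (2 * (1 - 2 ^ (1 - t))⁻¹) * knorm a r t x ^ t *
        ENNReal.ofReal (α ^ (1 - t)) := by
  classical
  intro α hα
  obtain ⟨ht1, ht2⟩ := ht
  set K := knorm a r t x with hK
  set q : ℝ := (2:ℝ) ^ (1 - t) with hq
  have hq0 : 0 < q := Real.rpow_pos_of_pos two_pos _
  have hq1 : q < 1 := Real.rpow_lt_one_of_one_lt_of_neg one_lt_two (by linarith)
  -- the dyadic pieces
  set g : ℕ → Λ → ℝ≥0∞ := fun n j =>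
    if r j * (2 ^ n * α) / a j ^ 2 < |x j| ∧ |x j| ≤ r j * (2 ^ (n+1) * α) / a j ^ 2 then
      ENNReal.ofReal ((2:ℝ) ^ (n+1) * α * (r j ^ 2 / a j ^ 2)) else 0 with hg
  -- Step A : pointwise bound
  have stepA : rnorm1 r (Tthresh a r α x) ≤ ∑' j, ∑' n, g n j := by
    refine ENNReal.tsum_le_tsum fun j => ?_
    by_cases hcond : r j * α / a j ^ 2 < |x j|
    · have hcpos : 0 < r j * α / a j ^ 2 := by
        have := ha j; have := hr j; positivity
      obtain ⟨n, hn1, hn2⟩ := exists_dyadic hcpos hcond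
      have hmem : r j * (2 ^ n * α) / a j ^ 2 < |x j| ∧
          |x j| ≤ r j * (2 ^ (n+1) * α) / a j ^ 2 := by
        constructor
        · calc r j * (2 ^ n * α) / a j ^ 2 = 2 ^ n * (r j * α / a j ^ 2) := by ring
            _ < |x j| := hn1
        · calc |x j| ≤ 2 ^ (n+1) * (r j * α / a j ^ 2) := hn2
            _ = r j * (2 ^ (n+1) * α) / a j ^ 2 := by ring
      refine le_trans ?_ (ENNReal.le_tsum n)
      rw [hg]; simp only [hmem, and_self, if_true]
      apply ENNReal.ofReal_le_ofReal
      have hrj := (hr j).le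
      have h1 : r j * |Tthresh a r α x j| = r j * |x j| := by
        simp [Tthresh, hcond]
      rw [h1]
      calc r j * |x j| ≤ r j * (r j * (2 ^ (n+1) * α) / a j ^ 2) :=
            mul_le_mul_of_nonneg_left hmem.2 hrj
        _ = (2:ℝ) ^ (n+1) * α * (r j ^ 2 / a j ^ 2) := by ring
    · simp [rnorm1, Tthresh, hcond]
  -- Step C : each dyadic layer
  have stepC : ∀ n : ℕ, ∑' j, g n j ≤
      ENNReal.ofReal ((2:ℝ) ^ (n+1) * α) * kSum a r (2 ^ n * α) x := by
    intro n
    rw [kSum, ← ENNReal.tsum_mul_left]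
    refine ENNReal.tsum_le_tsum fun j => ?_
    simp only [hg]
    by_cases hmem : r j * (2 ^ n * α) / a j ^ 2 < |x j| ∧
        |x j| ≤ r j * (2 ^ (n+1) * α) / a j ^ 2
    · rw [if_pos hmem, if_pos hmem.1, ← ENNReal.ofReal_mul (by positivity)]
    · simp [hmem]
  -- Step D+E : bound each layer by the weak norm
  have hβpos : ∀ n : ℕ, (0:ℝ) < 2 ^ n * α := fun n => by positivity
  have stepDE : ∀ n : ℕ,
      ENNReal.ofReal ((2:ℝ) ^ (n+1) * α) * kSum a r (2 ^ n * α) x ≤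
      K ^ t * (ENNReal.ofReal (2 * α ^ (1-t)) * (ENNReal.ofReal q) ^ n) := by
    intro n
    have hle := ksum_le a r t ht1 x (hβpos n)
    calc ENNReal.ofReal ((2:ℝ) ^ (n+1) * α) * kSum a r (2 ^ n * α) x
        ≤ ENNReal.ofReal ((2:ℝ) ^ (n+1) * α) * (K / ENNReal.ofReal (2 ^ n * α)) ^ t :=
          mul_le_mul_right hle _
      _ = K ^ t * (ENNReal.ofReal (2 * α ^ (1-t)) * (ENNReal.ofReal q) ^ n) := by
          rw [ENNReal.div_rpow_of_nonneg _ _ (by linarith : (0:ℝ) ≤ t)]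
          rw [ENNReal.ofReal_rpow_of_pos (hβpos n)]
          rw [ENNReal.div_eq_inv_mul, ← ENNReal.ofReal_inv_of_pos
            (Real.rpow_pos_of_pos (hβpos n) t)]
          rw [← mul_assoc, ← ENNReal.ofReal_mul (by positivity)]
          rw [real_key hα n, mul_comm _ (K ^ t)]
          congr 1
          rw [← ENNReal.ofReal_pow hq0.le, ← ENNReal.ofReal_mul (by positivity)]
  -- combine
  calc rnorm1 r (Tthresh a r α x)
      ≤ ∑' j, ∑' n, g n j := stepA
    _ = ∑' n, ∑' j, g n j := ENNReal.tsum_comm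
    _ ≤ ∑' n, K ^ t * (ENNReal.ofReal (2 * α ^ (1-t)) * (ENNReal.ofReal q) ^ n) :=
        ENNReal.tsum_le_tsum fun n => le_trans (stepC n) (stepDE n)
    _ = K ^ t * (ENNReal.ofReal (2 * α ^ (1-t)) * (1 - ENNReal.ofReal q)⁻¹) := by
        rw [ENNReal.tsum_mul_left, ENNReal.tsum_mul_left, ENNReal.tsum_geometric]
    _ = ENNReal.ofReal (2 * (1 - q)⁻¹) * K ^ t * ENNReal.ofReal (α ^ (1-t)) := by
        have h1q : (0:ℝ) < 1 - q := by linarith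
        rw [← ENNReal.ofReal_one, ← ENNReal.ofReal_sub 1 hq0.le,
          ← ENNReal.ofReal_inv_of_pos h1q]
        rw [ENNReal.ofReal_mul (by norm_num), ENNReal.ofReal_mul (by norm_num)]
        ring
end
end

section
/- Let $t\in(1,2)$ and $x\in\mathbb{R}^\Lambda$ with $\eta(x):=\sup_{\alpha>0}\alpha^{t-1}\|T_\alpha(x)\|_{\bar r,1}<\infty$. Then $\|x\|_{k_t}\le\eta(x)^{1/t}$. -/
open scoped ENNReal
noncomputable section

variable {Λ : Type*}

theorem stmt10 (a r : Λ → ℝ) (ha : ∀ j, 0 < a j) (hr : ∀ j, 0 < r j)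
    (t : ℝ) (ht : t ∈ Set.Ioo (1:ℝ) 2)
    (x : Λ → ℝ) (η : ℝ) (hη : 0 ≤ η)
    (hb : ∀ α > (0:ℝ), ENNReal.ofReal (α ^ (t - 1)) * rnorm1 r (Tthresh a r α x) ≤
      ENNReal.ofReal η) :
    knorm a r t x ≤ ENNReal.ofReal (η ^ (1 / t)) := by
  obtain ⟨ht1, ht2⟩ := ht
  have ht0 : (0:ℝ) < t := by linarith
  rw [knorm]
  refine iSup₂_le fun α hα => ?_
  have hα0 : (0:ℝ) < α := hα
  have hαt : (0:ℝ) < α ^ (t - 1) := Real.rpow_pos_of_pos hα0 _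
  have hαT : (0:ℝ) < α ^ t := Real.rpow_pos_of_pos hα0 _
  -- Step 1: kSum bound via the ℓ¹ norm of the thresholded vector
  have h1 : kSum a r α x ≤ ENNReal.ofReal α⁻¹ * rnorm1 r (Tthresh a r α x) := by
    rw [rnorm1, ← ENNReal.tsum_mul_left, kSum]
    refine ENNReal.tsum_le_tsum fun j => ?_
    rw [← ENNReal.ofReal_mul (inv_nonneg.mpr hα0.le)]
    apply ENNReal.ofReal_le_ofReal
    by_cases hc : r j * α / a j ^ 2 < |x j|
    · simp only [if_pos hc, Tthresh, if_pos hc]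
      have key : r j ^ 2 / a j ^ 2 = (r j * α / a j ^ 2) * (r j * α⁻¹) := by
        rw [div_mul_eq_mul_div,
          show r j * α * (r j * α⁻¹) = r j ^ 2 * (α * α⁻¹) by ring,
          mul_inv_cancel₀ hα0.ne', mul_one]
      calc r j ^ 2 / a j ^ 2 = (r j * α / a j ^ 2) * (r j * α⁻¹) := key
        _ ≤ |x j| * (r j * α⁻¹) :=
            mul_le_mul_of_nonneg_right hc.le (mul_nonneg (hr j).le (inv_nonneg.mpr hα0.le))
        _ = α⁻¹ * (r j * |x j|) := by ring
    · simp [hc, Tthresh]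
  -- Step 2: ℓ¹ bound
  have h2 : rnorm1 r (Tthresh a r α x) ≤ ENNReal.ofReal (η / α ^ (t - 1)) := by
    rw [ENNReal.ofReal_div_of_pos hαt]
    rw [ENNReal.le_div_iff_mul_le (Or.inl (ENNReal.ofReal_pos.mpr hαt).ne')
      (Or.inl ENNReal.ofReal_ne_top)]
    rw [mul_comm]
    exact hb α hα0
  have hsplit : α ^ t = α ^ (t - 1) * α := by
    have h := Real.rpow_add hα0 (t - 1) 1
    rw [Real.rpow_one] at h
    norm_num at h
    exact h
  have h3 : kSum a r α x ≤ ENNReal.ofReal (η / α ^ t) := by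
    calc kSum a r α x ≤ ENNReal.ofReal α⁻¹ * ENNReal.ofReal (η / α ^ (t - 1)) :=
          h1.trans (mul_le_mul_right h2 _)
      _ = ENNReal.ofReal (α⁻¹ * (η / α ^ (t - 1))) :=
          (ENNReal.ofReal_mul (inv_nonneg.mpr hα0.le)).symm
      _ = ENNReal.ofReal (η / α ^ t) := by
          congr 1
          rw [hsplit, ← div_div, div_eq_mul_inv (η / α ^ (t - 1)) α, mul_comm]
  have ht' : (0:ℝ) ≤ 1 / t := by positivity
  calc ENNReal.ofReal α * kSum a r α x ^ (1 / t)
      ≤ ENNReal.ofReal α * (ENNReal.ofReal (η / α ^ t)) ^ (1 / t) :=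
        mul_le_mul_right (ENNReal.rpow_le_rpow h3 ht') _
    _ = ENNReal.ofReal α * ENNReal.ofReal ((η / α ^ t) ^ (1 / t)) := by
        rw [← ENNReal.ofReal_rpow_of_nonneg (div_nonneg hη hαT.le) ht']
    _ = ENNReal.ofReal (α * (η / α ^ t) ^ (1 / t)) :=
        (ENNReal.ofReal_mul hα0.le).symm
    _ = ENNReal.ofReal (η ^ (1 / t)) := by
        congr 1
        have h4 : (α ^ t) ^ (1 / t) = α := by
          rw [← Real.rpow_mul hα0.le, mul_one_div, div_self ht0.ne', Real.rpow_one]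
        rw [Real.div_rpow hη hαT.le, h4, mul_comm, div_mul_cancel₀ _ hα0.ne']
end
end

section
/- Let $1\le p\le q<\infty$ and $(r_j)_{j\in\Lambda}$, $(s_j)_{j\in\Lambda}$ be sequences of positive reals. There exists $C>0$ with $\|x\|_{s,q}\le C\|x\|_{r,p}$ for all $x\in\ell^p_r$ (i.e., a continuous embedding $\ell^p_r\subset\ell^q_s$) if and only if the sequence $s_j r_j^{-1}$ is bounded. -/
open scoped ENNReal
noncomputable section

variable {Λ : Type*}


/- Every term is bounded by `S = ‖f‖_p`, so `f_j ^ q ≤ f_j ^ p * S ^ (q - p)`; summing gives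
`‖f‖_q ^ q ≤ S ^ q`. -/
theorem ENNReal.tsum_rpow_rpow_one_div_le_of_le {ι : Type*} (f : ι → ℝ≥0∞) {p q : ℝ}
    (hp : 0 < p) (hpq : p ≤ q) :
    (∑' j, f j ^ q) ^ (1 / q) ≤ (∑' j, f j ^ p) ^ (1 / p) := by
  have hq : 0 < q := hp.trans_le hpq
  set S : ℝ≥0∞ := (∑' j, f j ^ p) ^ (1 / p)
  have hSp : S ^ p = ∑' j, f j ^ p := by
    rw [← ENNReal.rpow_mul, one_div_mul_cancel hp.ne', ENNReal.rpow_one]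
  have hfS (j : ι) : f j ≤ S := by
    rw [← ENNReal.rpow_le_rpow_iff hp, hSp]
    exact ENNReal.le_tsum j
  rcases eq_or_ne S ⊤ with hS_top | hS_top
  · simp [hS_top]
  rcases eq_or_ne S 0 with hS_zero | hS_zero
  · have hf_zero (j : ι) : f j = 0 := le_antisymm (hS_zero ▸ hfS j) zero_le
    simp [hf_zero, ENNReal.zero_rpow_of_pos hq, hS_zero, hq]
  have hterm (j : ι) : f j ^ q ≤ f j ^ p * S ^ (q - p) := by
    rcases eq_or_ne (f j) 0 with hj | hj
    · simp [hj, ENNReal.zero_rpow_of_pos hq]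
    · have hj_top : f j ≠ ⊤ := ne_top_of_le_ne_top hS_top (hfS j)
      calc f j ^ q = f j ^ p * f j ^ (q - p) := by
            rw [← ENNReal.rpow_add _ _ hj hj_top, add_sub_cancel]
        _ ≤ f j ^ p * S ^ (q - p) := by gcongr; exact hfS j
  have hsum : ∑' j, f j ^ q ≤ S ^ q :=
    calc ∑' j, f j ^ q ≤ ∑' j, f j ^ p * S ^ (q - p) := ENNReal.tsum_le_tsum hterm
      _ = S ^ q := by
        rw [ENNReal.tsum_mul_right, ← hSp, ← ENNReal.rpow_add _ _ hS_zero hS_top,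
          add_sub_cancel]
  calc (∑' j, f j ^ q) ^ (1 / q) ≤ (S ^ q) ^ (1 / q) := by gcongr
    _ = S := by rw [← ENNReal.rpow_mul, mul_one_div_cancel hq.ne', ENNReal.rpow_one]

section wnorm

variable {ω : Λ → ℝ} {t : ℝ}

theorem wnorm_eq_tsum_ofReal_mul_abs_rpow (hω : ∀ j, 0 ≤ ω j) (ht : 0 < t) (x : Λ → ℝ) :
    wnorm ω t x = (∑' j, ENNReal.ofReal (ω j * |x j|) ^ t) ^ (1 / t) := by
  unfold wnorm
  congr 1
  refine tsum_congr fun j => ?_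
  rw [ENNReal.ofReal_rpow_of_nonneg (mul_nonneg (hω j) (abs_nonneg _)) ht.le,
    Real.mul_rpow (hω j) (abs_nonneg _)]

theorem wnorm_antitone_exponent (hω : ∀ j, 0 ≤ ω j) {p q : ℝ} (hp : 0 < p) (hpq : p ≤ q)
    (x : Λ → ℝ) : wnorm ω q x ≤ wnorm ω p x := by
  rw [wnorm_eq_tsum_ofReal_mul_abs_rpow hω (hp.trans_le hpq),
    wnorm_eq_tsum_ofReal_mul_abs_rpow hω hp]
  exact ENNReal.tsum_rpow_rpow_one_div_le_of_le _ hp hpq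

theorem wnorm_mono_weight {ω' : Λ → ℝ} (hω : ∀ j, 0 ≤ ω j) (hωω' : ∀ j, ω j ≤ ω' j)
    (ht : 0 < t) (x : Λ → ℝ) : wnorm ω t x ≤ wnorm ω' t x := by
  have hω' (j : Λ) : 0 ≤ ω' j := (hω j).trans (hωω' j)
  rw [wnorm_eq_tsum_ofReal_mul_abs_rpow hω ht, wnorm_eq_tsum_ofReal_mul_abs_rpow hω' ht]
  gcongr with j
  exact hωω' j

theorem wnorm_const_mul_weight {c : ℝ} (hc : 0 ≤ c) (hω : ∀ j, 0 ≤ ω j) (ht : 0 < t)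
    (x : Λ → ℝ) : wnorm (fun j => c * ω j) t x = ENNReal.ofReal c * wnorm ω t x := by
  rw [wnorm_eq_tsum_ofReal_mul_abs_rpow (fun j => mul_nonneg hc (hω j)) ht,
    wnorm_eq_tsum_ofReal_mul_abs_rpow hω ht]
  simp_rw [mul_assoc, ENNReal.ofReal_mul hc, ENNReal.mul_rpow_of_nonneg _ _ ht.le,
    ENNReal.tsum_mul_left]
  rw [ENNReal.mul_rpow_of_nonneg _ _ (one_div_nonneg.mpr ht.le), ← ENNReal.rpow_mul,
    mul_one_div_cancel ht.ne', ENNReal.rpow_one]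

theorem wnorm_single_one (hω : ∀ j, 0 ≤ ω j) (ht : 0 < t) [DecidableEq Λ] (j : Λ) :
    wnorm ω t (Pi.single j 1) = ENNReal.ofReal (ω j) := by
  rw [wnorm_eq_tsum_ofReal_mul_abs_rpow hω ht, tsum_eq_single j fun i hi => by
    simp [hi, ENNReal.zero_rpow_of_pos ht]]
  simp only [Pi.single_eq_same, abs_one, mul_one]
  rw [← ENNReal.rpow_mul, mul_one_div_cancel ht.ne', ENNReal.rpow_one]

end wnorm

theorem stmt11 (r s : Λ → ℝ) (hr : ∀ j, 0 < r j) (hs : ∀ j, 0 < s j)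
    (p q : ℝ) (hp : 1 ≤ p) (hpq : p ≤ q) :
    (∃ C > (0:ℝ), ∀ x : Λ → ℝ, wnorm s q x ≤ ENNReal.ofReal C * wnorm r p x) ↔
      ∃ C : ℝ, ∀ j, s j / r j ≤ C := by
  classical
  have hp0 : 0 < p := one_pos.trans_le hp
  have hq0 : 0 < q := hp0.trans_le hpq
  have hr0 (j : Λ) : 0 ≤ r j := (hr j).le
  have hs0 (j : Λ) : 0 ≤ s j := (hs j).le
  constructor
  · rintro ⟨C, hC, hembed⟩
    refine ⟨C, fun j => (div_le_iff₀ (hr j)).mpr ?_⟩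
    have hj := hembed (Pi.single j 1)
    rwa [wnorm_single_one hs0 hq0, wnorm_single_one hr0 hp0, ← ENNReal.ofReal_mul hC.le,
      ENNReal.ofReal_le_ofReal_iff (mul_nonneg hC.le (hr0 j))] at hj
  · rintro ⟨C, hC⟩
    have hD : 0 < max C 1 := one_pos.trans_le (le_max_right C 1)
    refine ⟨max C 1, hD, fun x => ?_⟩
    have hsD (j : Λ) : s j ≤ max C 1 * r j :=
      (div_le_iff₀ (hr j)).mp ((hC j).trans (le_max_left C 1))
    calc wnorm s q x ≤ wnorm (fun j => max C 1 * r j) q x := wnorm_mono_weight hs0 hsD hq0 x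
      _ = ENNReal.ofReal (max C 1) * wnorm r q x := wnorm_const_mul_weight hD.le hr0 hq0 x
      _ ≤ ENNReal.ofReal (max C 1) * wnorm r p x := by
        gcongr
        exact wnorm_antitone_exponent hr0 hp0 hpq x
end
end

section
/- In the setting of weighted $\ell^1$-Tikhonov regularization with exact data: if $x_\alpha$ minimizes $x\mapsto\tfrac12\|F(x^+)-F(x)\|_Y^2+\alpha\|x\|_{\bar r,1}$ and there is $C_2$ with $\tfrac12\|F(x^+)-F(x_\alpha)\|_Y^2+\alpha\|x_\alpha\|_{\bar r,1}\le C_2\alpha^{2-t}$, then $\|F(x^+)-F(x_\alpha)\|_Y\le\sqrt{2C_2}\,\alpha^{(2-t)/2}$. Conversely, if $\|x^+\|_{k_t}\le\varrho$ for $t\in(1,2)$ and the two-sided Lipschitz condition holds on a shrinkage-closed domain $D$ containing $x^+$, then $\tfrac12\|F(x^+)-F(x_\alpha)\|_Y^2+\alpha\|x_\alpha\|_{\bar r,1}\le C_t\varrho^t\alpha^{2-t}$ for a constant $C_t$ depending only on $t$ and $L$. -/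
/-! The first claim is the bound on the Tikhonov functional solved for the residual.

For the second, compare the minimiser with the hard-thresholded `T_α x⁺`, which lies in `D` by
shrinkage. With `s_j = a_j² |x⁺_j| / r_j` and weights `w_j = r_j² / a_j²`, the hypothesis
`‖x⁺‖_{k_t} ≤ ρ` is the weak-type bound `∑_{s_j > β} w_j ≤ (ρ / β)^t`, while
`‖T_α x⁺‖_{r,1} = ∑_{s_j > α} w_j s_j` and `‖x⁺ - T_α x⁺‖²_{a,2} = ∑_{s_j ≤ α} w_j s_j²`.
Cutting these sums into the dyadic layers `2^k α < s_j ≤ 2^(k+1) α`, resp.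
`2^(-k-1) α < s_j ≤ 2^(-k) α`, bounds them by geometric series, of order `ρ^t α^(1-t)` since
`t > 1` and `ρ^t α^(2-t)` since `t < 2`; the upper Lipschitz bound carries the second one over
to the residual `‖F x⁺ - F (T_α x⁺)‖²`. -/

open scoped ENNReal
noncomputable section

variable {Λ : Type*}

def weightedDistrib (w s : Λ → ℝ) (β : ℝ) : ℝ≥0∞ :=
  ∑' j, ENNReal.ofReal (if β < s j then w j else 0)

lemma exists_two_pow_mul_lt_le {d y : ℝ} (hd : 0 < d) (h : d < y) :
    ∃ k : ℕ, 2 ^ k * d < y ∧ y ≤ 2 ^ (k + 1) * d := by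
  obtain ⟨n, hn₁, hn₂⟩ := exists_mem_Ioc_zpow (div_pos (hd.trans h) hd) one_lt_two
  have hn : 0 ≤ n := by
    by_contra! hn
    have : (2 : ℝ) ^ (n + 1) ≤ 1 := zpow_le_one_of_nonpos₀ one_le_two (by omega)
    exact absurd ((one_lt_div hd).mpr h) (not_lt.mpr (hn₂.trans this))
  lift n to ℕ using hn
  refine ⟨n, ?_, ?_⟩
  · rw [lt_div_iff₀ hd] at hn₁
    exact_mod_cast hn₁
  · rw [div_le_iff₀ hd] at hn₂
    exact_mod_cast hn₂

lemma two_mul_rpow_mul_div_rpow {β ρ : ℝ} (hβ : 0 < β) (hρ : 0 ≤ ρ) (p t : ℝ) :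
    (2 * β) ^ p * (ρ / β) ^ t = 2 ^ p * ρ ^ t * β ^ (p - t) := by
  rw [Real.mul_rpow zero_le_two hβ.le, Real.div_rpow hρ hβ.le, Real.rpow_sub hβ]
  field_simp

lemma tsum_ofReal_mul_geometric {c q : ℝ} (hc : 0 ≤ c) (hq₀ : 0 ≤ q) (hq₁ : q < 1) :
    ∑' k : ℕ, ENNReal.ofReal (c * q ^ k) = ENNReal.ofReal (c / (1 - q)) := by
  rw [← ENNReal.ofReal_tsum_of_nonneg (fun k => by positivity)
    ((summable_geometric_of_lt_one hq₀ hq₁).mul_left c), tsum_mul_left,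
    tsum_geometric_of_lt_one hq₀ hq₁, div_eq_mul_inv]

lemma tsum_ofReal_le_tsum_mul_weightedDistrib {w s g : Λ → ℝ} {c β : ℕ → ℝ}
    (hw : ∀ j, 0 ≤ w j) (hg : ∀ j, 0 < g j → ∃ k, β k < s j ∧ g j ≤ c k * w j) :
    ∑' j, ENNReal.ofReal (g j) ≤ ∑' k, ENNReal.ofReal (c k) * weightedDistrib w s (β k) := by
  simp_rw [weightedDistrib, ← ENNReal.tsum_mul_left]
  rw [ENNReal.tsum_comm]
  refine ENNReal.tsum_le_tsum fun j => ?_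
  rcases le_or_gt (g j) 0 with hj | hj
  · simp [ENNReal.ofReal_of_nonpos hj]
  obtain ⟨k, hk, hgk⟩ := hg j hj
  refine le_trans ?_ (ENNReal.le_tsum k)
  rw [if_pos hk, ← ENNReal.ofReal_mul' (hw j)]
  exact ENNReal.ofReal_le_ofReal hgk

section WeakType

variable {w s : Λ → ℝ} {ρ t p α : ℝ}

lemma tsum_large_le_of_weightedDistrib_le (hw : ∀ j, 0 ≤ w j) (hρ : 0 ≤ ρ) (hp : 0 ≤ p)
    (hpt : p < t) (hα : 0 < α)
    (hweak : ∀ β > 0, weightedDistrib w s β ≤ ENNReal.ofReal ((ρ / β) ^ t)) :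
    ∑' j, ENNReal.ofReal (if α < s j then w j * s j ^ p else 0) ≤
      ENNReal.ofReal (2 ^ p / (1 - 2 ^ (p - t)) * ρ ^ t * α ^ (p - t)) := by
  have hq : (2 : ℝ) ^ (p - t) < 1 := Real.rpow_lt_one_of_one_lt_of_neg one_lt_two (by linarith)
  calc _ ≤ ∑' k : ℕ, ENNReal.ofReal ((2 * (2 ^ k * α)) ^ p) *
          weightedDistrib w s (2 ^ k * α) := by
        refine tsum_ofReal_le_tsum_mul_weightedDistrib hw fun j hj => ?_
        have hs : α < s j := by
          by_contra h
          simp [h] at hj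
        obtain ⟨k, hk₁, hk₂⟩ := exists_two_pow_mul_lt_le hα hs
        refine ⟨k, hk₁, ?_⟩
        rw [if_pos hs, mul_comm _ (w j)]
        refine mul_le_mul_of_nonneg_left (Real.rpow_le_rpow (hα.trans hs).le ?_ hp) (hw j)
        calc s j ≤ 2 ^ (k + 1) * α := hk₂
          _ = 2 * (2 ^ k * α) := by ring
    _ ≤ ∑' k : ℕ, ENNReal.ofReal (2 ^ p * ρ ^ t * α ^ (p - t) * (2 ^ (p - t)) ^ k) := by
        refine ENNReal.tsum_le_tsum fun k => ?_
        have hβ : (0 : ℝ) < 2 ^ k * α := by positivity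
        calc _ ≤ ENNReal.ofReal ((2 * (2 ^ k * α)) ^ p) *
              ENNReal.ofReal ((ρ / (2 ^ k * α)) ^ t) := by gcongr; exact hweak _ hβ
          _ = _ := by
            rw [← ENNReal.ofReal_mul (by positivity), two_mul_rpow_mul_div_rpow hβ hρ,
              Real.mul_rpow (by positivity) hα.le, Real.rpow_pow_comm zero_le_two]
            ring_nf
    _ = _ := by
        rw [tsum_ofReal_mul_geometric (by positivity) (by positivity) hq]
        ring_nf

lemma tsum_small_le_of_weightedDistrib_le (hw : ∀ j, 0 ≤ w j) (hs : ∀ j, 0 ≤ s j) (hρ : 0 ≤ ρ)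
    (hp : 0 < p) (htp : t < p) (hα : 0 < α)
    (hweak : ∀ β > 0, weightedDistrib w s β ≤ ENNReal.ofReal ((ρ / β) ^ t)) :
    ∑' j, ENNReal.ofReal (if s j ≤ α then w j * s j ^ p else 0) ≤
      ENNReal.ofReal (2 ^ p * 2⁻¹ ^ (p - t) / (1 - 2⁻¹ ^ (p - t)) * ρ ^ t * α ^ (p - t)) := by
  have hq : (2⁻¹ : ℝ) ^ (p - t) < 1 := Real.rpow_lt_one (by norm_num) (by norm_num) (by linarith)
  calc _ ≤ ∑' k : ℕ, ENNReal.ofReal ((2 * (α * 2⁻¹ ^ (k + 1))) ^ p) *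
          weightedDistrib w s (α * 2⁻¹ ^ (k + 1)) := by
        refine tsum_ofReal_le_tsum_mul_weightedDistrib hw fun j hj => ?_
        have hsα : s j ≤ α := by
          by_contra h
          simp [h] at hj
        have hs₀ : 0 < s j := by
          refine (hs j).lt_of_ne' fun h => ?_
          simp [h, Real.zero_rpow hp.ne'] at hj
        obtain ⟨k, hk₁, hk₂⟩ := exists_nat_pow_near_of_lt_one (div_pos hs₀ hα)
          ((div_le_one hα).mpr hsα) (by norm_num : (0 : ℝ) < 2⁻¹) (by norm_num)
        rw [lt_div_iff₀ hα, mul_comm] at hk₁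
        rw [div_le_iff₀ hα, mul_comm] at hk₂
        refine ⟨k, hk₁, ?_⟩
        rw [if_pos hsα, mul_comm _ (w j)]
        refine mul_le_mul_of_nonneg_left (Real.rpow_le_rpow hs₀.le ?_ hp.le) (hw j)
        calc s j ≤ α * 2⁻¹ ^ k := hk₂
          _ = 2 * (α * 2⁻¹ ^ (k + 1)) := by ring
    _ ≤ ∑' k : ℕ, ENNReal.ofReal
          (2 ^ p * 2⁻¹ ^ (p - t) * ρ ^ t * α ^ (p - t) * (2⁻¹ ^ (p - t)) ^ k) := by
        refine ENNReal.tsum_le_tsum fun k => ?_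
        have hβ : (0 : ℝ) < α * 2⁻¹ ^ (k + 1) := by positivity
        calc _ ≤ ENNReal.ofReal ((2 * (α * 2⁻¹ ^ (k + 1))) ^ p) *
              ENNReal.ofReal ((ρ / (α * 2⁻¹ ^ (k + 1))) ^ t) := by gcongr; exact hweak _ hβ
          _ = _ := by
            rw [← ENNReal.ofReal_mul (by positivity), two_mul_rpow_mul_div_rpow hβ hρ,
              Real.mul_rpow hα.le (by positivity), ← Real.rpow_pow_comm (by norm_num), pow_succ]
            ring_nf
    _ = _ := by
        rw [tsum_ofReal_mul_geometric (by positivity) (by positivity) hq]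
        ring_nf

end WeakType

lemma mul_div_sq_lt_abs_iff {a r : ℝ} (ha : 0 < a) (hr : 0 < r) (α x : ℝ) :
    r * α / a ^ 2 < |x| ↔ α < a ^ 2 * |x| / r := by
  rw [div_lt_iff₀ (by positivity), lt_div_iff₀ hr, mul_comm r, mul_comm (a ^ 2)]

section Thresholding

variable {a r : Λ → ℝ} {t ρ α : ℝ} {x : Λ → ℝ}

lemma weightedDistrib_le_of_knorm_le (ha : ∀ j, 0 < a j) (hr : ∀ j, 0 < r j) (ht : 0 < t)
    (hρ : 0 ≤ ρ) (hk : knorm a r t x ≤ ENNReal.ofReal ρ) {β : ℝ} (hβ : 0 < β) :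
    weightedDistrib (fun j => r j ^ 2 / a j ^ 2) (fun j => a j ^ 2 * |x j| / r j) β ≤
      ENNReal.ofReal ((ρ / β) ^ t) := by
  have hkSum : kSum a r β x =
      weightedDistrib (fun j => r j ^ 2 / a j ^ 2) (fun j => a j ^ 2 * |x j| / r j) β :=
    tsum_congr fun j => by simp only [mul_div_sq_lt_abs_iff (ha j) (hr j)]
  have hβρ : ENNReal.ofReal β * kSum a r β x ^ (1 / t) ≤ ENNReal.ofReal ρ :=
    (le_iSup₂ (f := fun α (_ : α ∈ Set.Ioi (0 : ℝ)) =>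
      ENNReal.ofReal α * kSum a r α x ^ (1 / t)) β hβ).trans hk
  have hroot : kSum a r β x ^ (1 / t) ≤ ENNReal.ofReal (ρ / β) := by
    rw [ENNReal.ofReal_div_of_pos hβ, ENNReal.le_div_iff_mul_le (by simp [hβ]) (by simp),
      mul_comm]
    exact hβρ
  calc _ = (kSum a r β x ^ (1 / t)) ^ t := by
        rw [hkSum, ← ENNReal.rpow_mul, one_div_mul_cancel ht.ne', ENNReal.rpow_one]
    _ ≤ ENNReal.ofReal (ρ / β) ^ t := ENNReal.rpow_le_rpow hroot ht.le
    _ = _ := ENNReal.ofReal_rpow_of_nonneg (by positivity) ht.le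

lemma abs_Tthresh_le (a r : Λ → ℝ) (α : ℝ) (x : Λ → ℝ) (j : Λ) :
    |Tthresh a r α x j| ≤ |x j| := by
  unfold Tthresh
  split_ifs <;> simp

lemma rnorm1_Tthresh_le (ha : ∀ j, 0 < a j) (hr : ∀ j, 0 < r j) (ht : 1 < t) (hρ : 0 ≤ ρ)
    (hα : 0 < α) (hk : knorm a r t x ≤ ENNReal.ofReal ρ) :
    rnorm1 r (Tthresh a r α x) ≤
      ENNReal.ofReal (2 ^ (1 : ℝ) / (1 - 2 ^ (1 - t)) * ρ ^ t * α ^ (1 - t)) := by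
  refine le_of_eq_of_le (tsum_congr fun j => ?_) (tsum_large_le_of_weightedDistrib_le
    (fun j => by have := ha j; positivity) hρ zero_le_one ht hα
    fun β => weightedDistrib_le_of_knorm_le ha hr (by linarith) hρ hk)
  have := ha j
  have := hr j
  simp only [Tthresh, ← mul_div_sq_lt_abs_iff (ha j) (hr j), Real.rpow_one]
  split_ifs
  · congr 1
    field_simp
  · simp

lemma anorm2_sub_Tthresh_sq_le (ha : ∀ j, 0 < a j) (hr : ∀ j, 0 < r j) (ht₀ : 0 < t)
    (ht : t < 2) (hρ : 0 ≤ ρ) (hα : 0 < α) (hk : knorm a r t x ≤ ENNReal.ofReal ρ) :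
    anorm2 a (x - Tthresh a r α x) ^ 2 ≤
      ENNReal.ofReal (2 ^ (2 : ℝ) * 2⁻¹ ^ (2 - t) / (1 - 2⁻¹ ^ (2 - t)) * ρ ^ t * α ^ (2 - t)) := by
  rw [anorm2, ← ENNReal.rpow_natCast, ← ENNReal.rpow_mul,
    show (1 : ℝ) / 2 * (2 : ℕ) = 1 by norm_num, ENNReal.rpow_one]
  refine le_of_eq_of_le (tsum_congr fun j => ?_) (tsum_small_le_of_weightedDistrib_le
    (fun j => by have := ha j; positivity) (fun j => by have := ha j; have := hr j; positivity)
    hρ two_pos ht hα fun β => weightedDistrib_le_of_knorm_le ha hr ht₀ hρ hk)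
  have := ha j
  have := hr j
  simp only [Pi.sub_apply, Tthresh, ← not_lt, ← mul_div_sq_lt_abs_iff (ha j) (hr j),
    Real.rpow_two]
  split_ifs
  · simp
  · congr 1
    field_simp
    rw [sq_abs]
    ring

end Thresholding

lemma le_sqrt_two_mul_of_ofReal_half_sq_le {u c : ℝ}
    (h : ENNReal.ofReal (1 / 2 * u ^ 2) ≤ ENNReal.ofReal c) : u ≤ √(2 * c) := by
  rcases ENNReal.ofReal_le_ofReal_iff'.mp h with h | h
  · exact Real.le_sqrt_of_sq_le (by linarith)
  · have hu : u ^ 2 = 0 := by linarith [sq_nonneg u]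
    rw [pow_eq_zero_iff two_ne_zero |>.mp hu]
    positivity

lemma sq_le_of_ofReal_le_mul {u L M : ℝ} {A : ℝ≥0∞} (hu : 0 ≤ u) (hL : 0 ≤ L) (hM : 0 ≤ M)
    (h : ENNReal.ofReal u ≤ ENNReal.ofReal L * A) (hA : A ^ 2 ≤ ENNReal.ofReal M) :
    u ^ 2 ≤ L ^ 2 * M := by
  rw [← ENNReal.ofReal_le_ofReal_iff (by positivity), ENNReal.ofReal_pow hu,
    ENNReal.ofReal_mul (sq_nonneg L), ENNReal.ofReal_pow hL]
  calc ENNReal.ofReal u ^ 2 ≤ (ENNReal.ofReal L * A) ^ 2 := by gcongr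
    _ ≤ ENNReal.ofReal L ^ 2 * ENNReal.ofReal M := by rw [mul_pow]; gcongr

theorem stmt15_general {Y : Type*} [NormedAddCommGroup Y]
    (a r : Λ → ℝ) (ha : ∀ j, 0 < a j) (hr : ∀ j, 0 < r j)
    (D : Set (Λ → ℝ)) (F : (Λ → ℝ) → Y) (L : ℝ) (hL : 0 < L)
    (hlipUp : ∀ x₁ ∈ D, ∀ x₂ ∈ D,
      ENNReal.ofReal ‖F x₁ - F x₂‖ ≤ ENNReal.ofReal L * anorm2 a (x₁ - x₂))
    (hshrink : ∀ x ∈ D, ∀ z : Λ → ℝ, (∀ j, |z j| ≤ |x j|) → z ∈ D)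
    (t : ℝ) (ht : t ∈ Set.Ioo (1:ℝ) 2)
    (xplus : Λ → ℝ) (hxD : xplus ∈ D) :
    (∀ α > (0:ℝ), ∀ C₂ : ℝ, ∀ xa ∈ D,
      (∀ z ∈ D, ENNReal.ofReal ((1 / 2) * ‖F xplus - F xa‖ ^ 2) +
          ENNReal.ofReal α * rnorm1 r xa ≤
        ENNReal.ofReal ((1 / 2) * ‖F xplus - F z‖ ^ 2) + ENNReal.ofReal α * rnorm1 r z) →
      ENNReal.ofReal ((1 / 2) * ‖F xplus - F xa‖ ^ 2) + ENNReal.ofReal α * rnorm1 r xa ≤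
        ENNReal.ofReal (C₂ * α ^ (2 - t)) →
      ‖F xplus - F xa‖ ≤ Real.sqrt (2 * C₂) * α ^ ((2 - t) / 2)) ∧
    (∀ ρ > (0:ℝ), knorm a r t xplus ≤ ENNReal.ofReal ρ →
      ∃ Ct > (0:ℝ), ∀ α > (0:ℝ), ∀ xa ∈ D,
        (∀ z ∈ D, ENNReal.ofReal ((1 / 2) * ‖F xplus - F xa‖ ^ 2) +
            ENNReal.ofReal α * rnorm1 r xa ≤
          ENNReal.ofReal ((1 / 2) * ‖F xplus - F z‖ ^ 2) +
            ENNReal.ofReal α * rnorm1 r z) →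
        ENNReal.ofReal ((1 / 2) * ‖F xplus - F xa‖ ^ 2) + ENNReal.ofReal α * rnorm1 r xa ≤
          ENNReal.ofReal (Ct * ρ ^ t * α ^ (2 - t))) := by
  obtain ⟨ht₁, ht₂⟩ := ht
  refine ⟨fun α hα C₂ xa _ _ hbound => ?_, fun ρ hρ hk => ?_⟩
  · calc ‖F xplus - F xa‖ ≤ √(2 * (C₂ * α ^ (2 - t))) :=
          le_sqrt_two_mul_of_ofReal_half_sq_le (le_self_add.trans hbound)
      _ = √(2 * C₂) * α ^ ((2 - t) / 2) := by
          rw [← mul_assoc, Real.sqrt_mul' _ (by positivity), Real.sqrt_eq_rpow (α ^ _),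
            ← Real.rpow_mul hα.le]
          ring_nf
  set CA : ℝ := 2 ^ (1 : ℝ) / (1 - 2 ^ (1 - t))
  set CB : ℝ := 2 ^ (2 : ℝ) * 2⁻¹ ^ (2 - t) / (1 - 2⁻¹ ^ (2 - t))
  have hCA : 0 < CA := div_pos (by positivity)
    (sub_pos.mpr (Real.rpow_lt_one_of_one_lt_of_neg one_lt_two (by linarith)))
  have hCB : 0 < CB := div_pos (by positivity)
    (sub_pos.mpr (Real.rpow_lt_one (by norm_num) (by norm_num) (by linarith)))
  refine ⟨L ^ 2 / 2 * CB + CA, by positivity, fun α hα xa _ hmin => ?_⟩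
  set z := Tthresh a r α xplus
  have hzD : z ∈ D := hshrink xplus hxD z (abs_Tthresh_le a r α xplus)
  have hres : ‖F xplus - F z‖ ^ 2 ≤ L ^ 2 * (CB * ρ ^ t * α ^ (2 - t)) :=
    sq_le_of_ofReal_le_mul (norm_nonneg _) hL.le (by positivity) (hlipUp xplus hxD z hzD)
      (anorm2_sub_Tthresh_sq_le ha hr (by linarith) ht₂ hρ.le hα hk)
  have hpen : rnorm1 r z ≤ ENNReal.ofReal (CA * ρ ^ t * α ^ (1 - t)) :=
    rnorm1_Tthresh_le ha hr ht₁ hρ.le hα hk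
  calc _ ≤ _ := hmin z hzD
    _ ≤ ENNReal.ofReal (L ^ 2 / 2 * (CB * ρ ^ t * α ^ (2 - t))) +
          ENNReal.ofReal α * ENNReal.ofReal (CA * ρ ^ t * α ^ (1 - t)) := by
        exact add_le_add (ENNReal.ofReal_le_ofReal (by linarith)) (by gcongr)
    _ = _ := by
        rw [← ENNReal.ofReal_mul hα.le, ← ENNReal.ofReal_add (by positivity) (by positivity),
          show (2 : ℝ) - t = 1 + (1 - t) by ring, Real.rpow_add hα, Real.rpow_one]
        ring_nf

theorem stmt15 {Y : Type*} [NormedAddCommGroup Y]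
    (a r : Λ → ℝ) (ha : ∀ j, 0 < a j) (hr : ∀ j, 0 < r j)
    (D : Set (Λ → ℝ)) (F : (Λ → ℝ) → Y) (L : ℝ) (hL : 0 < L)
    (hlipLow : ∀ x₁ ∈ D, ∀ x₂ ∈ D,
      anorm2 a (x₁ - x₂) ≤ ENNReal.ofReal (L * ‖F x₁ - F x₂‖))
    (hlipUp : ∀ x₁ ∈ D, ∀ x₂ ∈ D,
      ENNReal.ofReal ‖F x₁ - F x₂‖ ≤ ENNReal.ofReal L * anorm2 a (x₁ - x₂))
    (hshrink : ∀ x ∈ D, ∀ z : Λ → ℝ, (∀ j, |z j| ≤ |x j|) → z ∈ D)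
    (t : ℝ) (ht : t ∈ Set.Ioo (1:ℝ) 2)
    (xplus : Λ → ℝ) (hxD : xplus ∈ D) :
    (∀ α > (0:ℝ), ∀ C₂ : ℝ, ∀ xa ∈ D,
      (∀ z ∈ D, ENNReal.ofReal ((1 / 2) * ‖F xplus - F xa‖ ^ 2) +
          ENNReal.ofReal α * rnorm1 r xa ≤
        ENNReal.ofReal ((1 / 2) * ‖F xplus - F z‖ ^ 2) + ENNReal.ofReal α * rnorm1 r z) →
      ENNReal.ofReal ((1 / 2) * ‖F xplus - F xa‖ ^ 2) + ENNReal.ofReal α * rnorm1 r xa ≤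
        ENNReal.ofReal (C₂ * α ^ (2 - t)) →
      ‖F xplus - F xa‖ ≤ Real.sqrt (2 * C₂) * α ^ ((2 - t) / 2)) ∧
    (∀ ρ > (0:ℝ), knorm a r t xplus ≤ ENNReal.ofReal ρ →
      ∃ Ct > (0:ℝ), ∀ α > (0:ℝ), ∀ xa ∈ D,
        (∀ z ∈ D, ENNReal.ofReal ((1 / 2) * ‖F xplus - F xa‖ ^ 2) +
            ENNReal.ofReal α * rnorm1 r xa ≤
          ENNReal.ofReal ((1 / 2) * ‖F xplus - F z‖ ^ 2) +
            ENNReal.ofReal α * rnorm1 r z) →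
        ENNReal.ofReal ((1 / 2) * ‖F xplus - F xa‖ ^ 2) + ENNReal.ofReal α * rnorm1 r xa ≤
          ENNReal.ofReal (Ct * ρ ^ t * α ^ (2 - t))) :=
  stmt15_general a r ha hr D F L hL hlipUp hshrink t ht xplus hxD
end
end
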